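/- arXiv:1307.0843 — 10 statements merged into one kernel-verified Lean document; each statement's English description precedes it below -/
import Mathlib

section
/- For every integer d ≥ 2 there exist a real ε > 0 and n₀ ∈ ℕ such that the following holds: if G is a distance graph in ℝ^d on n ≥ n₀ vertices, then the number of (⌊d/2⌋+1)-cliques of G is at most n^{⌊d/2⌋+1−ε}. -/
/-!
Let `k = ⌊d/2⌋ + 1`. A unit-distance graph in `ℝ^d` contains no complete `k`-partite subgraph
with three vertices in each part. Indeed, every point of one part is equidistant from all points
of any other part, so the differences of points within distinct parts are orthogonal; and the
three points of a part lie on a unit sphere around a point of another part, so they span an affine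
plane. This would give `2k > d` linearly independent vectors in `ℝ^d`.

Counting then follows the hypergraph Kővári–Sós–Turán argument. Applying Jensen's inequality for
powers once per coordinate shows that the density `δ` of ordered `k`-cliques satisfies
`δ ^ 3 ^ k ≤` the density of `3 × ⋯ × 3` boxes all of whose corners are cliques. Only
degenerate boxes qualify, and their density is at most `9k / n`, so there are at most
`n ^ (k - 1 / (2 · 3 ^ k))` cliques once `n ≥ (9k) ^ 2`.
-/

noncomputable def cliqueCount {V : Type} (G : SimpleGraph V) (r : ℕ) : ℕ :=
  Set.ncard {S : Finset V | G.IsNClique r S}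

open Finset Function
open scoped BigOperators

theorem two_mul_card_le_finrank_of_dist_eq {E ι : Type*} [NormedAddCommGroup E]
    [InnerProductSpace ℝ E] [FiniteDimensional ℝ E] [Fintype ι] [Nontrivial ι]
    {x : ι → Fin 3 → E} {r : ℝ} (hx : ∀ i, Injective (x i))
    (hr : ∀ i j, i ≠ j → ∀ a b, dist (x i a) (x j b) = r) :
    2 * Fintype.card ι ≤ Module.finrank ℝ E := by
  set W : ι → Submodule ℝ E := fun i =>
    Submodule.span ℝ (Set.range fun a : {a : Fin 3 // a ≠ 0} => x i a - x i 0)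
  have hli : ∀ i, LinearIndependent ℝ fun a : {a : Fin 3 // a ≠ 0} => x i a - x i 0 := by
    intro i
    obtain ⟨j, hj⟩ := exists_ne i
    have hcos : EuclideanGeometry.Cospherical (Set.range (x i)) :=
      ⟨x j 0, r, by rintro _ ⟨a, rfl⟩; exact hr i j hj.symm a 0⟩
    exact (affineIndependent_iff_linearIndependent_vsub ℝ (x i) 0).1
      (hcos.affineIndependent subset_rfl (hx i))
  have horth : OrthogonalFamily ℝ (fun i => W i) fun i => (W i).subtypeₗᵢ := by
    refine OrthogonalFamily.of_pairwise fun i j hij => Submodule.isOrtho_span.2 ?_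
    rintro _ ⟨a, rfl⟩ _ ⟨b, rfl⟩
    have hc : ∀ a b, dist (x j b) (x i a) = r := fun a b => hr j i hij.symm b a
    exact EuclideanGeometry.inner_vsub_vsub_of_dist_eq_of_dist_eq
      ((hc 0 0).trans (hc 0 b).symm) ((hc a 0).trans (hc a b).symm)
  have hsigma := linearIndependent_iUnion_finite hli
    fun i _ _ hi => horth.independent.disjoint_biSup hi
  simpa [mul_comm] using hsigma.fintype_card_le_finrank

lemma pow_expect_le_expect_pow {ι : Type*} (s : Finset ι) {f : ι → ℝ} (hf : ∀ i ∈ s, 0 ≤ f i)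
    {m : ℕ} (hm : m ≠ 0) : (𝔼 i ∈ s, f i) ^ m ≤ 𝔼 i ∈ s, f i ^ m := by
  obtain ⟨m, rfl⟩ := Nat.exists_eq_succ_of_ne_zero hm
  rw [expect_eq_sum_div_card, expect_eq_sum_div_card, div_pow, pow_succ (#s : ℝ), ← div_div]
  gcongr
  exact pow_sum_div_card_le_sum_pow hf m

section Degenerate

variable {κ ι β : Type*} [Fintype κ] [DecidableEq κ] [Fintype ι] [DecidableEq ι] [Fintype β]
  [DecidableEq β]

lemma card_filter_apply_apply_eq_mul_le (i : κ) {a b : ι} (hab : a ≠ b) :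
    #{x : κ → ι → β | x i a = x i b} * Fintype.card β ≤ Fintype.card (κ → ι → β) := by
  rw [← card_univ (α := β), ← card_product, ← card_univ]
  -- overwriting `x i a` loses nothing, since it can be read off as `x i b`
  refine card_le_card_of_injOn (fun p => update p.1 i (update (p.1 i) a p.2))
    (fun _ _ => mem_univ _) ?_
  rintro ⟨x, v⟩ hx ⟨y, w⟩ hy h
  simp only [mem_coe, mem_product, mem_filter, mem_univ, true_and, and_true] at hx hy
  have happ : ∀ j c, update x i (update (x i) a v) j c = update y i (update (y i) a w) j c :=
    fun j c => congrFun (congrFun h j) c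
  have hvw : v = w := by simpa using happ i a
  refine Prod.ext (funext fun j => funext fun c => ?_) hvw
  by_cases hj : j = i
  · subst hj
    by_cases hc : c = a
    · subst hc
      have hb : x j b = y j b := by simpa [hab.symm] using happ j b
      exact hx.trans (hb.trans hy.symm)
    · simpa [hc] using happ j c
  · simpa [hj] using happ j c

lemma card_filter_exists_not_injective_mul_le :
    #{x : κ → ι → β | ∃ i, ¬Injective (x i)} * Fintype.card β
      ≤ Fintype.card κ * Fintype.card ι ^ 2 * Fintype.card (κ → ι → β) := by
  set T : Finset (κ × ι × ι) := {t | t.2.1 ≠ t.2.2}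
  have hsub : ({x : κ → ι → β | ∃ i, ¬Injective (x i)} : Finset _)
      ⊆ T.biUnion fun t => {x : κ → ι → β | x t.1 t.2.1 = x t.1 t.2.2} := by
    intro x hx
    obtain ⟨i, hi⟩ := (mem_filter.1 hx).2
    obtain ⟨a, b, hab, hne⟩ := not_injective_iff.1 hi
    exact mem_biUnion.2 ⟨(i, a, b), by simp [T, hne], by simp [hab]⟩
  calc #{x : κ → ι → β | ∃ i, ¬Injective (x i)} * Fintype.card β
      ≤ ∑ t ∈ T, #{x : κ → ι → β | x t.1 t.2.1 = x t.1 t.2.2} * Fintype.card β := by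
        rw [← sum_mul]
        exact Nat.mul_le_mul_right _ ((card_le_card hsub).trans card_biUnion_le)
    _ ≤ ∑ _t ∈ T, Fintype.card (κ → ι → β) :=
        sum_le_sum fun t ht => card_filter_apply_apply_eq_mul_le t.1 (mem_filter.1 ht).2
    _ ≤ Fintype.card κ * Fintype.card ι ^ 2 * Fintype.card (κ → ι → β) := by
        rw [sum_const, smul_eq_mul, sq, ← mul_assoc]
        refine Nat.mul_le_mul_right _ ((card_filter_le _ _).trans ?_)
        simp [mul_assoc]

end Degenerate

section BoxInequality

variable {V : Type*} [Fintype V]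

noncomputable def boxAverage (m : ℕ) {k : ℕ} (f : (Fin k → V) → ℝ) : ℝ :=
  𝔼 x : Fin k → Fin m → V, ∏ s : Fin k → Fin m, f fun i => x i (s i)

lemma expect_pi_fin_succ {M : Type*} [AddCommMonoid M] [Module ℚ≥0 M] {k : ℕ}
    (f : (Fin (k + 1) → V) → M) :
    𝔼 y, f y = 𝔼 y : Fin k → V, 𝔼 v, f (Fin.cons v y) := by
  rw [← Fintype.expect_equiv (Fin.consEquiv fun _ => V) (fun p => f (Fin.cons p.1 p.2)) f
    (fun _ => rfl), ← univ_product_univ, expect_product' univ univ fun v y => f (Fin.cons v y),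
    expect_comm]

lemma prod_pi_fin_succ {M : Type*} [CommMonoid M] {k : ℕ} (g : (Fin (k + 1) → V) → M) :
    ∏ y, g y = ∏ y : Fin k → V, ∏ v, g (Fin.cons v y) := by
  rw [← Fintype.prod_equiv (Fin.consEquiv fun _ => V) (fun p => g (Fin.cons p.1 p.2)) g
    (fun _ => rfl), Fintype.prod_prod_type, prod_comm]

lemma boxAverage_succ (m : ℕ) {k : ℕ} (f : (Fin (k + 1) → V) → ℝ) :
    boxAverage m f = 𝔼 c : Fin m → V, boxAverage m fun y => ∏ a, f (Fin.cons (c a) y) := by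
  have hcons : ∀ (c : Fin m → V) (x : Fin k → Fin m → V) (a : Fin m) (s : Fin k → Fin m),
      (fun i => (Fin.cons c x : Fin (k + 1) → Fin m → V) i
        ((Fin.cons a s : Fin (k + 1) → Fin m) i)) = Fin.cons (c a) fun i => x i (s i) := by
    intro c x a s
    funext i
    cases i using Fin.cases <;> simp
  unfold boxAverage
  rw [expect_pi_fin_succ, expect_comm]
  refine expect_congr rfl fun c _ => expect_congr rfl fun x _ => ?_
  rw [prod_pi_fin_succ]
  simp only [hcons]

theorem pow_expect_le_boxAverage {m : ℕ} (hm : m ≠ 0) {k : ℕ} (f : (Fin k → V) → ℝ)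
    (hf : ∀ y, 0 ≤ f y) : (𝔼 y, f y) ^ m ^ k ≤ boxAverage m f := by
  induction k with
  | zero => simp [boxAverage, Subsingleton.elim (fun i : Fin 0 => _) default]
  | succ k ih =>
    set T : (Fin m → V) → ℝ := fun c => 𝔼 y : Fin k → V, ∏ a, f (Fin.cons (c a) y)
    have hfirst : (𝔼 y, f y) ^ m ≤ 𝔼 c, T c := calc
      (𝔼 y, f y) ^ m = (𝔼 y : Fin k → V, 𝔼 v, f (Fin.cons v y)) ^ m := by rw [expect_pi_fin_succ]
      _ ≤ 𝔼 y : Fin k → V, (𝔼 v, f (Fin.cons v y)) ^ m :=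
        pow_expect_le_expect_pow _ (fun y _ => expect_nonneg fun v _ => hf _) hm
      _ = 𝔼 c, T c := by
        simp only [T, expect_pow, Fintype.piFinset_univ]
        exact expect_comm _ _ _
    calc (𝔼 y, f y) ^ m ^ (k + 1) = ((𝔼 y, f y) ^ m) ^ m ^ k := by rw [pow_succ', pow_mul]
      _ ≤ (𝔼 c, T c) ^ m ^ k :=
        pow_le_pow_left₀ (pow_nonneg (expect_nonneg fun y _ => hf y) m) hfirst _
      _ ≤ 𝔼 c, T c ^ m ^ k := pow_expect_le_expect_pow (f := T) univ
        (fun c _ => expect_nonneg fun y _ => prod_nonneg fun a _ => hf _) (pow_ne_zero k hm)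
      _ ≤ 𝔼 c, boxAverage m fun y => ∏ a, f (Fin.cons (c a) y) :=
        expect_le_expect fun c _ => by exact ih _ fun y => prod_nonneg fun a _ => hf _
      _ = boxAverage m f := (boxAverage_succ m f).symm

def BoxFree (m : ℕ) {k : ℕ} (A : Finset (Fin k → V)) : Prop :=
  ∀ x : Fin k → Fin m → V, (∀ i, Injective (x i)) → ∃ s : Fin k → Fin m, (fun i => x i (s i)) ∉ A

theorem BoxFree.card_pow_mul_le [DecidableEq V] [Nonempty V] {m k : ℕ} {A : Finset (Fin k → V)}
    (hA : BoxFree m A) (hm : m ≠ 0) :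
    (#A : ℝ) ^ m ^ k * Fintype.card V ≤ k * m ^ 2 * (Fintype.card V : ℝ) ^ (k * m ^ k) := by
  set n := Fintype.card V
  set N := Fintype.card (Fin k → Fin m → V)
  set f : (Fin k → V) → ℝ := fun y => if y ∈ A then 1 else 0
  set bad : Finset (Fin k → Fin m → V) := {x | ∃ i, ¬Injective (x i)}
  have hn : (0 : ℝ) < n := by positivity
  have hN : (0 : ℝ) < N := by positivity
  have hmean : 𝔼 y, f y = #A / (n : ℝ) ^ k := by simp [f, Fintype.expect_eq_sum_div_card, n]
  have hbox : boxAverage m f ≤ #bad / N := by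
    rw [boxAverage, Fintype.expect_eq_sum_div_card]
    gcongr
    simp only [f, Fintype.prod_boole, sum_boole]
    refine Nat.cast_le.2 (card_le_card fun x hx => ?_)
    simp only [bad, mem_filter, mem_univ, true_and] at hx ⊢
    by_contra! hinj
    obtain ⟨s, hs⟩ := hA x hinj
    exact hs (hx s)
  have hdens : ((#A : ℝ) / n ^ k) ^ m ^ k ≤ #bad / N :=
    hmean ▸ (pow_expect_le_boxAverage hm f fun y => by simp only [f]; positivity).trans hbox
  have hbad : (#bad : ℝ) * n ≤ k * m ^ 2 * N := by
    have h := card_filter_exists_not_injective_mul_le (κ := Fin k) (ι := Fin m) (β := V)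
    rw [Fintype.card_fin, Fintype.card_fin] at h
    exact_mod_cast (by convert h : #bad * n ≤ k * m ^ 2 * N)
  calc (#A : ℝ) ^ m ^ k * n = ((#A : ℝ) / n ^ k) ^ m ^ k * n * n ^ (k * m ^ k) := by
        rw [div_pow, ← pow_mul]; field_simp
    _ ≤ #bad / N * n * n ^ (k * m ^ k) := by gcongr
    _ = #bad * n / N * n ^ (k * m ^ k) := by ring
    _ ≤ k * m ^ 2 * N / N * n ^ (k * m ^ k) := by gcongr
    _ = k * m ^ 2 * n ^ (k * m ^ k) := by field_simp

end BoxInequality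

lemma le_rpow_sub_of_pow_mul_le {a C n : ℝ} {K N : ℕ} (hN : N ≠ 0) (hn : 0 < n)
    (hC : C ^ 2 ≤ n) (h : a ^ N * n ≤ C * n ^ (K * N)) :
    a ≤ n ^ ((K : ℝ) - 1 / (2 * N)) := by
  have hCn : C ≤ n ^ (1 / 2 : ℝ) := by
    rw [← Real.sqrt_eq_rpow]
    exact (le_abs_self C).trans (Real.abs_le_sqrt hC)
  refine le_of_pow_le_pow_left₀ hN (by positivity) ?_
  rw [← Real.rpow_natCast (n ^ _), ← Real.rpow_mul hn.le]
  calc a ^ N ≤ C * n ^ (K * N) / n := by rw [le_div_iff₀ hn]; exact h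
    _ ≤ n ^ (1 / 2 : ℝ) * n ^ ((K * N : ℕ) : ℝ) / n := by
        rw [Real.rpow_natCast]; gcongr
    _ = n ^ (((K : ℝ) - 1 / (2 * N)) * N) := by
        rw [mul_div_assoc, ← Real.rpow_sub_one hn.ne', ← Real.rpow_add hn]
        congr 1
        push_cast
        field_simp
        ring

lemma cliqueCount_le_card_pairwise_adj {V : Type} [Fintype V] [DecidableEq V] (G : SimpleGraph V)
    [DecidableRel G.Adj] (k : ℕ) :
    cliqueCount G k ≤ #{y : Fin k → V | ∀ a b, a ≠ b → G.Adj (y a) (y b)} := by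
  rw [cliqueCount, ← SimpleGraph.cliqueSet, ← SimpleGraph.coe_cliqueFinset, Set.ncard_coe_finset]
  refine card_le_card_of_surjOn (fun y => univ.image y) fun s hs => ?_
  have hs : G.IsNClique k s := (SimpleGraph.mem_cliqueFinset_iff).1 hs
  set e := s.equivFinOfCardEq hs.card_eq
  refine ⟨fun i => e.symm i, ?_, ?_⟩
  · simp only [coe_filter, mem_univ, true_and, Set.mem_ofPred_eq]
    intro a b hab
    exact hs.isClique (e.symm a).2 (e.symm b).2 fun h => hab (e.symm.injective (Subtype.ext h))
  · ext v
    simp only [mem_image, mem_univ, true_and]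
    exact ⟨by rintro ⟨i, rfl⟩; exact (e.symm i).2, fun hv => ⟨e ⟨v, hv⟩, by simp⟩⟩

lemma boxFree_three_of_dist_eq_one {E : Type*} [NormedAddCommGroup E] [InnerProductSpace ℝ E]
    [FiniteDimensional ℝ E] {P : Set E} [Fintype P] {G : SimpleGraph P}
    [DecidableRel G.Adj] (hG : ∀ u v, G.Adj u v → dist (u : E) v = 1) {k : ℕ} (hk : 2 ≤ k)
    (hkE : Module.finrank ℝ E < 2 * k) :
    BoxFree 3 ({y | ∀ a b, a ≠ b → G.Adj (y a) (y b)} : Finset (Fin k → P)) := by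
  intro x hx
  by_contra! hall
  have : Nontrivial (Fin k) := Fin.nontrivial_iff_two_le.2 hk
  have hdist : ∀ i j, i ≠ j → ∀ a b, dist (x i a : E) (x j b) = 1 := by
    intro i j hij a b
    have hadj := (mem_filter.1 (hall (update (update (fun _ => 0) i a) j b))).2 i j hij
    simp only [update_self, update_of_ne hij] at hadj
    exact hG _ _ hadj
  have := two_mul_card_le_finrank_of_dist_eq (fun i => Subtype.coe_injective.comp (hx i)) hdist
  rw [Fintype.card_fin] at this
  omega

/-- For every `d ≥ 2` there exist `ε > 0` and `n₀` such that every distance graph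
in `ℝ^d` on `n ≥ n₀` vertices (a graph whose vertices are points of `ℝ^d` and whose
edges join only pairs of points at Euclidean distance exactly 1) has at most
`n ^ (⌊d/2⌋ + 1 - ε)` cliques of size `⌊d/2⌋ + 1`. -/
theorem clique_count_distance_graph (d : ℕ) (hd : 2 ≤ d) :
    ∃ ε : ℝ, 0 < ε ∧ ∃ n₀ : ℕ,
      ∀ (P : Finset (EuclideanSpace ℝ (Fin d))) (G : SimpleGraph (P : Set (EuclideanSpace ℝ (Fin d)))),
        (∀ u v : (P : Set (EuclideanSpace ℝ (Fin d))), G.Adj u v →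
          dist (u : EuclideanSpace ℝ (Fin d)) (v : EuclideanSpace ℝ (Fin d)) = 1) →
        n₀ ≤ P.card →
        (cliqueCount G (d / 2 + 1) : ℝ) ≤ (P.card : ℝ) ^ (((d / 2 + 1 : ℕ) : ℝ) - ε) := by
  classical
  set k := d / 2 + 1
  refine ⟨1 / (2 * ((3 ^ k : ℕ) : ℝ)), by positivity, (9 * k) ^ 2, fun P G hG hP => ?_⟩
  have hcard : Fintype.card (P : Set (EuclideanSpace ℝ (Fin d))) = P.card := by simp
  have hPpos : 0 < P.card := lt_of_lt_of_le (pow_pos (by omega) 2) hP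
  have : Nonempty (P : Set (EuclideanSpace ℝ (Fin d))) := Fintype.card_pos_iff.1 (hcard ▸ hPpos)
  have hfree := boxFree_three_of_dist_eq_one hG (k := k) (by omega)
    (by rw [finrank_euclideanSpace_fin]; omega)
  have hcount := hfree.card_pow_mul_le (by norm_num)
  rw [hcard] at hcount
  refine (Nat.cast_le.2 (cliqueCount_le_card_pairwise_adj G k)).trans
    (le_rpow_sub_of_pow_mul_le (by positivity) (by exact_mod_cast hPpos) ?_ hcount)
  exact_mod_cast (by linarith : (k * 3 ^ 2) ^ 2 ≤ P.card)
end

section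
/- For all integers s ≥ 1 and d ≥ 2, the distance Ramsey number satisfies R_D(s,s,d) ≤ 2·⌊d/2⌋·R(⌈s/⌊d/2⌋⌉, ⌈s/⌊d/2⌋⌉). -/
/-- A simple graph `H` is isomorphic to a distance graph in `ℝ^d` if there is an
injective map of its vertices into `d`-dimensional Euclidean space sending
adjacent pairs to pairs at Euclidean distance exactly 1. -/
def IsDistGraphRealizable (d : ℕ) {V : Type} (H : SimpleGraph V) : Prop :=
  ∃ φ : V → EuclideanSpace ℝ (Fin d), Function.Injective φ ∧
    ∀ u v : V, H.Adj u v → dist (φ u) (φ v) = 1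

/-- The distance Ramsey number `R_D(s, t, d)`. -/
noncomputable def distRamsey (s t d : ℕ) : ℕ :=
  sInf {n : ℕ | ∀ G : SimpleGraph (Fin n),
    (∃ S : Finset (Fin n), S.card = s ∧
      IsDistGraphRealizable d (G.induce (↑S : Set (Fin n)))) ∨
    (∃ S : Finset (Fin n), S.card = t ∧
      IsDistGraphRealizable d (Gᶜ.induce (↑S : Set (Fin n))))}

/-- The classical Ramsey number `R(s, t)`: the minimum `n` such that every
simple graph `G` on `n` vertices contains an independent set of `s` vertices,
or its complement contains an independent set of `t` vertices. -/
noncomputable def ramsey (s t : ℕ) : ℕ :=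
  sInf {n : ℕ | ∀ G : SimpleGraph (Fin n),
    (∃ S : Finset (Fin n), S.card = s ∧ ∀ u ∈ S, ∀ v ∈ S, ¬ G.Adj u v) ∨
    (∃ S : Finset (Fin n), S.card = t ∧ ∀ u ∈ S, ∀ v ∈ S, ¬ Gᶜ.Adj u v)}

/-!
Put `k = ⌊d/2⌋`, `m = ⌈s/k⌉` and `r = R(m, m)`. Every `r` vertices of a graph `G` contain an
`m`-set that is independent in `G` or in `Gᶜ`, and `m ≤ r`, so on `2kr` vertices one can peel off
`2k` pairwise disjoint such sets; `k` of them are independent in the same graph `H ∈ {G, Gᶜ}`.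
Their union has `km ≥ s` vertices and induces a `k`-colourable subgraph of `H`. A `k`-colourable
graph is a distance graph in `ℝ^{2k}`: colour class `i` goes to distinct points of the circle of
radius `1/√2` in the coordinate plane `(2i, 2i+1)`, and two points of different classes are
orthogonal vectors of squared norm `1/2`, hence at distance `1`.
-/

open Finset SimpleGraph Function
open scoped RealInnerProductSpace

namespace SimpleGraph

variable {V W : Type*}

theorem isIndepSet_iff_forall_not_adj (G : SimpleGraph V) {s : Set V} :
    G.IsIndepSet s ↔ ∀ u ∈ s, ∀ v ∈ s, ¬ G.Adj u v :=
  ⟨fun h _ hu _ hv huv => h hu hv (G.ne_of_adj huv) huv, fun h u hu v hv _ => h u hu v hv⟩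

theorem compl_comap (G : SimpleGraph W) (f : V ↪ W) : (G.comap f)ᶜ = Gᶜ.comap f := by
  ext
  simp [f.injective.ne_iff]

theorem IsNIndepSet.map_of_comap {G : SimpleGraph W} {f : V ↪ W} {n : ℕ} {s : Finset V}
    (h : (G.comap f).IsNIndepSet n s) : G.IsNIndepSet n (s.map f) :=
  ⟨by rw [coe_map]; exact h.isIndepSet.image, by rw [card_map, h.card_eq]⟩

theorem card_filter_adj_add_card_filter_compl_adj [DecidableEq V] (G : SimpleGraph V)
    [DecidableRel G.Adj] {T : Finset V} {v : V} (hv : v ∈ T) :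
    #(T.filter (G.Adj v)) + #(T.filter (Gᶜ.Adj v)) + 1 = #T := by
  have hfilter : (T.erase v).filter (fun u => ¬ G.Adj v u) = T.filter (Gᶜ.Adj v) := by
    ext u
    simp only [mem_filter, mem_erase, compl_adj]
    tauto
  have hadj : (T.erase v).filter (G.Adj v) = T.filter (G.Adj v) := by
    ext u
    simp only [mem_filter, mem_erase]
    exact ⟨fun h => ⟨h.1.2, h.2⟩, fun h => ⟨⟨(G.ne_of_adj h.2).symm, h.1⟩, h.2⟩⟩
  rw [← hadj, ← hfilter, card_filter_add_card_filter_not, card_erase_add_one hv]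

theorem exists_isNClique_succ_of_filter_adj {H K : SimpleGraph V} [DecidableEq V]
    [DecidableRel H.Adj] {T : Finset V} {v : V} {a b : ℕ} (hv : v ∈ T)
    (h : ∃ S ⊆ T.filter (H.Adj v), H.IsNClique a S ∨ K.IsNClique b S) :
    ∃ S ⊆ T, H.IsNClique (a + 1) S ∨ K.IsNClique b S := by
  obtain ⟨S, hST, hS | hS⟩ := h
  · refine ⟨insert v S, insert_subset hv (hST.trans (filter_subset _ _)), Or.inl ?_⟩
    exact hS.insert fun u hu => (mem_filter.1 (hST hu)).2
  · exact ⟨S, hST.trans (filter_subset _ _), Or.inr hS⟩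

theorem exists_isNClique_or_isNClique_compl [DecidableEq V] (G : SimpleGraph V)
    [DecidableRel G.Adj] (a b : ℕ) (T : Finset V) (hT : (a + b).choose a ≤ #T) :
    ∃ S ⊆ T, G.IsNClique a S ∨ Gᶜ.IsNClique b S := by
  match a, b with
  | 0, _ => exact ⟨∅, empty_subset _, Or.inl (isNClique_empty.2 rfl)⟩
  | _ + 1, 0 => exact ⟨∅, empty_subset _, Or.inr (isNClique_empty.2 rfl)⟩
  | a + 1, b + 1 =>
    obtain ⟨v, hv⟩ : T.Nonempty := card_pos.1 (lt_of_lt_of_le (Nat.choose_pos (by omega)) hT)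
    have hsplit := G.card_filter_adj_add_card_filter_compl_adj hv
    have hpascal : (a + 1 + (b + 1)).choose (a + 1) =
        (a + (b + 1)).choose a + (b + (a + 1)).choose b := by
      rw [Nat.choose_symm_add (a := b), show b + (a + 1) = a + (b + 1) by omega,
        show a + 1 + (b + 1) = a + (b + 1) + 1 by omega, Nat.choose_succ_succ']
    rcases le_or_gt ((a + (b + 1)).choose a) #(T.filter (G.Adj v)) with h | h
    · exact exists_isNClique_succ_of_filter_adj hv
        (exists_isNClique_or_isNClique_compl G a (b + 1) _ h)
    -- The symmetric case: recurse in `Gᶜ` with the roles of `a` and `b` exchanged.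
    · obtain ⟨S, hST, hS⟩ := exists_isNClique_succ_of_filter_adj (K := G) hv (by
        simpa only [compl_compl] using
          exists_isNClique_or_isNClique_compl Gᶜ b (a + 1) (T.filter (Gᶜ.Adj v)) (by omega))
      exact ⟨S, hST, hS.symm⟩
termination_by a + b

theorem colorable_induce_of_subset_biUnion {ι : Type*} [DecidableEq V]
    {G : SimpleGraph V} {J : Finset ι} {F : ι → Finset V} (hF : ∀ i ∈ J, G.IsIndepSet (F i))
    {S : Set V} (hS : S ⊆ J.biUnion F) : (G.induce S).Colorable #J := by
  choose c hcJ hcF using fun v : S => mem_biUnion.1 (hS v.2)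
  simpa using (Coloring.mk (fun v => (⟨c v, hcJ v⟩ : J)) fun {u v} huv huv' => by
    have hc : c u = c v := congrArg Subtype.val huv'
    exact hF _ (hcJ u) (hcF u) (hc ▸ hcF v) (G.ne_of_adj huv) huv).colorable

end SimpleGraph

-- `ramsey a b` is an `sInf`, which would be `0` if no graph size forced the pattern; the
-- Erdős–Szekeres bound `(a + b).choose a` rules this out.
theorem ramsey_spec (a b : ℕ) (G : SimpleGraph (Fin (ramsey a b))) :
    (∃ S, G.IsNIndepSet a S) ∨ ∃ S, Gᶜ.IsNIndepSet b S := by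
  have hne : {n | ∀ G : SimpleGraph (Fin n),
      (∃ S : Finset (Fin n), S.card = a ∧ ∀ u ∈ S, ∀ v ∈ S, ¬ G.Adj u v) ∨
      (∃ S : Finset (Fin n), S.card = b ∧ ∀ u ∈ S, ∀ v ∈ S, ¬ Gᶜ.Adj u v)}.Nonempty := by
    classical
    refine ⟨(a + b).choose a, fun G => ?_⟩
    obtain ⟨S, -, hS | hS⟩ := Gᶜ.exists_isNClique_or_isNClique_compl a b univ (by simp)
    · rw [isNClique_compl] at hS
      exact Or.inl ⟨S, hS.card_eq, (G.isIndepSet_iff_forall_not_adj).1 hS.isIndepSet⟩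
    · rw [isNClique_compl] at hS
      exact Or.inr ⟨S, hS.card_eq, (Gᶜ.isIndepSet_iff_forall_not_adj).1 hS.isIndepSet⟩
  have hmem : ramsey a b ∈ _ := Nat.sInf_mem hne
  simpa only [isNIndepSet_iff, isIndepSet_iff_forall_not_adj, mem_coe, and_comm] using hmem G

theorem min_le_ramsey (a b : ℕ) : min a b ≤ ramsey a b := by
  rcases ramsey_spec a b ⊥ with ⟨S, hS⟩ | ⟨S, hS⟩
  · exact min_le_of_left_le (by simpa [hS.card_eq] using card_le_univ S)
  · exact min_le_of_right_le (by simpa [hS.card_eq] using card_le_univ S)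

theorem SimpleGraph.exists_isNIndepSet_of_ramsey_le {V : Type*} (G : SimpleGraph V) {a b : ℕ}
    {T : Finset V} (hT : ramsey a b ≤ #T) :
    ∃ S ⊆ T, G.IsNIndepSet a S ∨ Gᶜ.IsNIndepSet b S := by
  let f : Fin (ramsey a b) ↪ V :=
    (Fin.castLEEmb hT).trans (T.equivFin.symm.toEmbedding.trans (Embedding.subtype _))
  have hf : ∀ S : Finset (Fin (ramsey a b)), S.map f ⊆ T := fun S x hx => by
    obtain ⟨i, -, rfl⟩ := mem_map.1 hx
    exact (T.equivFin.symm _).2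
  rcases ramsey_spec a b (G.comap f) with ⟨S, hS⟩ | ⟨S, hS⟩
  · exact ⟨S.map f, hf S, Or.inl hS.map_of_comap⟩
  · rw [compl_comap] at hS
    exact ⟨S.map f, hf S, Or.inr hS.map_of_comap⟩

theorem Finset.exists_pairwise_disjoint_of_forall_exists {V : Type*} [DecidableEq V]
    {P : Finset V → Prop} {m r : ℕ} (hmr : m ≤ r)
    (hP : ∀ T : Finset V, r ≤ #T → ∃ S ⊆ T, #S = m ∧ P S) :
    ∀ (j : ℕ) (T : Finset V), j * r ≤ #T →
      ∃ F : Fin j → Finset V, (∀ i, F i ⊆ T ∧ #(F i) = m ∧ P (F i)) ∧ Pairwise (Disjoint on F)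
  | 0, _, _ => ⟨Fin.elim0, fun i => i.elim0, fun i => i.elim0⟩
  | j + 1, T, hT => by
    rw [Nat.succ_mul] at hT
    obtain ⟨S, hST, hSm, hS⟩ := hP T (by omega)
    obtain ⟨F, hF, hdisj⟩ := exists_pairwise_disjoint_of_forall_exists hmr hP j (T \ S)
      (by rw [card_sdiff_of_subset hST]; omega)
    have hSF : ∀ i, Disjoint S (F i) := fun i => disjoint_sdiff.mono_right (hF i).1
    refine ⟨Fin.cons S F, Fin.cases ⟨hST, hSm, hS⟩ fun i =>
      ⟨(hF i).1.trans sdiff_subset, (hF i).2⟩, fun i i' hii' => ?_⟩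
    cases i using Fin.cases <;> cases i' using Fin.cases
    · exact absurd rfl hii'
    · exact hSF _
    · exact (hSF _).symm
    · exact hdisj (ne_of_apply_ne Fin.succ hii')

theorem Finset.exists_subset_card_eq_and_forall_or {ι : Type*} {p q : ι → Prop} {s : Finset ι}
    {k : ℕ} (hs : 2 * k ≤ #s) (h : ∀ i ∈ s, p i ∨ q i) :
    ∃ t ⊆ s, #t = k ∧ ((∀ i ∈ t, p i) ∨ ∀ i ∈ t, q i) := by
  classical
  rcases le_or_gt k #(s.filter p) with hp | hp
  · obtain ⟨t, hts, htk⟩ := exists_subset_card_eq hp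
    exact ⟨t, hts.trans (filter_subset _ _), htk, Or.inl fun i hi => (mem_filter.1 (hts hi)).2⟩
  · have hq : k ≤ #(s.filter fun i => ¬ p i) := by
      have := card_filter_add_card_filter_not (s := s) p
      omega
    obtain ⟨t, hts, htk⟩ := exists_subset_card_eq hq
    refine ⟨t, hts.trans (filter_subset _ _), htk, Or.inr fun i hi => ?_⟩
    obtain ⟨his, hnp⟩ := mem_filter.1 (hts hi)
    exact (h i his).resolve_left hnp

theorem isDistGraphRealizable_of_colorable {V : Type} [Countable V] {H : SimpleGraph V} {k d : ℕ}
    (hH : H.Colorable k) (hkd : 2 * k ≤ d) : IsDistGraphRealizable d H := by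
  obtain ⟨c⟩ := hH
  obtain ⟨n, hn⟩ := Countable.exists_injective_nat V
  let e : Fin k × Fin 2 ↪ Fin d := finProdFinEquiv.toEmbedding.trans (Fin.castLEEmb (by omega))
  let x : V → ℝ := fun v => 1 / (n v + 2)
  let y : V → ℝ := fun v => √(1 / 2 - x v ^ 2)
  let φ : V → EuclideanSpace ℝ (Fin d) := fun v =>
    EuclideanSpace.single (e (c v, 0)) (x v) + EuclideanSpace.single (e (c v, 1)) (y v)
  have hx : Injective x := fun u v huv => hn (by simpa [x] using huv)
  have hxy : ∀ v, x v ^ 2 + y v ^ 2 = 1 / 2 := fun v => by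
    have : x v ≤ 1 / 2 := by
      simp only [x]; gcongr; linarith [(n v).cast_nonneg (α := ℝ)]
    rw [Real.sq_sqrt (by nlinarith [show 0 ≤ x v by positivity])]
    ring
  have hφ : ∀ v, φ v (e (c v, 0)) = x v := fun v => by simp [φ]
  have hinner : ∀ u v, ⟪φ u, φ v⟫ = if c u = c v then x u * x v + y u * y v else 0 := by
    intro u v
    split_ifs with h <;>
      simp [φ, inner_add_left, inner_add_right, EuclideanSpace.inner_single_left, h]
  have hnorm : ∀ v, ‖φ v‖ ^ 2 = 1 / 2 := fun v => by
    rw [← real_inner_self_eq_norm_sq, hinner, if_pos rfl, ← hxy]; ring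
  refine ⟨φ, fun u v huv => ?_, fun u v huv => ?_⟩
  · by_cases hc : c u = c v
    · refine hx ?_
      rw [← hφ, ← hφ, huv, hc]
    · have h := hinner u v
      rw [if_neg hc, huv, real_inner_self_eq_norm_sq, hnorm] at h
      norm_num at h
  · have h := norm_sub_sq_eq_norm_sq_add_norm_sq_real (by rw [hinner, if_neg (c.valid huv)])
    rw [dist_eq_norm]
    nlinarith [hnorm u, hnorm v, norm_nonneg (φ u - φ v)]

theorem exists_card_eq_isDistGraphRealizable_induce {V : Type} {ι : Type*} [DecidableEq V]
    {H : SimpleGraph V} {J : Finset ι} {F : ι → Finset V} {m s d : ℕ}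
    (hdisj : (J : Set ι).PairwiseDisjoint F) (hF : ∀ i ∈ J, H.IsIndepSet (F i))
    (hm : ∀ i ∈ J, #(F i) = m) (hs : s ≤ #J * m) (hd : 2 * #J ≤ d) :
    ∃ S : Finset V, #S = s ∧ IsDistGraphRealizable d (H.induce S) := by
  have hcard : #(J.biUnion F) = #J * m := by
    rw [card_biUnion hdisj, sum_congr rfl hm, sum_const, smul_eq_mul]
  obtain ⟨S, hSU, rfl⟩ := exists_subset_card_eq (hcard ▸ hs)
  exact ⟨S, rfl, isDistGraphRealizable_of_colorable
    (colorable_induce_of_subset_biUnion hF (coe_subset.2 hSU)) hd⟩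

theorem Nat.le_mul_ceil_div (s : ℕ) {k : ℕ} (hk : 0 < k) : s ≤ k * ⌈(s : ℝ) / k⌉₊ := by
  have h := Nat.le_ceil ((s : ℝ) / k)
  rw [div_le_iff₀ (by positivity), mul_comm] at h
  exact_mod_cast h

theorem distRamsey_le_ramsey_general (s d : ℕ) (hd : 2 ≤ d) :
    distRamsey s s d ≤
      2 * (d / 2) *
        ramsey ⌈(s : ℝ) / ((d / 2 : ℕ) : ℝ)⌉₊ ⌈(s : ℝ) / ((d / 2 : ℕ) : ℝ)⌉₊ := by
  classical
  set k := d / 2 with hk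
  set m := ⌈(s : ℝ) / (k : ℝ)⌉₊
  refine Nat.sInf_le fun G => ?_
  obtain ⟨F, hF, hdisj⟩ := exists_pairwise_disjoint_of_forall_exists
    (P := fun S : Finset (Fin (2 * k * ramsey m m)) => G.IsIndepSet ↑S ∨ Gᶜ.IsIndepSet ↑S)
    (min_self m ▸ min_le_ramsey m m)
    (fun T hT => by
      obtain ⟨S, hST, hS | hS⟩ := G.exists_isNIndepSet_of_ramsey_le hT
      exacts [⟨S, hST, hS.card_eq, Or.inl hS.isIndepSet⟩,
        ⟨S, hST, hS.card_eq, Or.inr hS.isIndepSet⟩])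
    (2 * k) univ (by simp)
  obtain ⟨J, -, hJ, hJF⟩ :=
    exists_subset_card_eq_and_forall_or (s := univ) (k := k) (by simp) fun i _ => (hF i).2.2
  have hskm : s ≤ #J * m := by rw [hJ]; exact Nat.le_mul_ceil_div s (by omega)
  have realize (H : SimpleGraph (Fin (2 * k * ramsey m m))) (hH : ∀ i ∈ J, H.IsIndepSet ↑(F i)) :
      ∃ S : Finset (Fin (2 * k * ramsey m m)), #S = s ∧ IsDistGraphRealizable d (H.induce ↑S) :=
    exists_card_eq_isDistGraphRealizable_induce (hdisj.set_pairwise J) hH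
      (fun i _ => (hF i).2.1) hskm (by omega)
  exact hJF.imp (realize G) (realize Gᶜ)

theorem distRamsey_le_ramsey (s d : ℕ) (hs : 1 ≤ s) (hd : 2 ≤ d) :
    distRamsey s s d ≤
      2 * (d / 2) *
        ramsey ⌈(s : ℝ) / ((d / 2 : ℕ) : ℝ)⌉₊ ⌈(s : ℝ) / ((d / 2 : ℕ) : ℝ)⌉₊ :=
  distRamsey_le_ramsey_general s d hd
end

section
/- For every integer d ≥ 2, there do not exist ⌊d/2⌋+1 pairwise disjoint sets A₁, …, A_{⌊d/2⌋+1} of points of d-dimensional Euclidean space, each of cardinality 3, such that for all i ≠ j, every point of A_i is at Euclidean distance exactly 1 from every point of A_j. Equivalently, no distance graph in ℝ^d contains a subgraph isomorphic to the complete (⌊d/2⌋+1)-partite graph K_{3,…,3} with all parts of size 3. -/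
/-!
If every point of a set `s` is at distance `1` from every point of `t`, then expanding
`‖x - y‖² = 1` shows `⟪x - x', y - y'⟫ = 0` for `x, x' ∈ s`, `y, y' ∈ t`: the direction spaces
`vectorSpan s` and `vectorSpan t` are orthogonal. Each part `Aᵢ` lies on a unit sphere centred at a
point of another part, so its three points are affinely independent and span a plane. The
`⌊d/2⌋ + 1` parts thus give pairwise orthogonal planes in `ℝ^d`, whence `2 (⌊d/2⌋ + 1) ≤ d`.
-/

open RealInnerProductSpace Module EuclideanGeometry

section InnerProductSpace

variable {E : Type*} [NormedAddCommGroup E] [InnerProductSpace ℝ E]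

lemma inner_sub_sub_eq_zero_of_dist_eq {x x' y y' : E} {r : ℝ}
    (h₁ : dist x y = r) (h₂ : dist x y' = r) (h₃ : dist x' y = r) (h₄ : dist x' y' = r) :
    ⟪x - x', y - y'⟫ = 0 := by
  have hsq : ∀ {u v : E}, dist u v = r → ‖u‖ ^ 2 - 2 * ⟪u, v⟫ + ‖v‖ ^ 2 = r ^ 2 := by
    intro u v h
    rw [← norm_sub_sq_real, ← dist_eq_norm, h]
  simp only [inner_sub_left, inner_sub_right]
  linarith [hsq h₁, hsq h₂, hsq h₃, hsq h₄]

lemma vectorSpan_isOrtho_of_forall_dist_eq {s t : Set E} {r : ℝ}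
    (h : ∀ x ∈ s, ∀ y ∈ t, dist x y = r) : vectorSpan ℝ s ⟂ vectorSpan ℝ t := by
  rw [vectorSpan_def, vectorSpan_def, Submodule.isOrtho_span]
  rintro _ ⟨x, hx, x', hx', rfl⟩ _ ⟨y, hy, y', hy', rfl⟩
  exact inner_sub_sub_eq_zero_of_dist_eq (h x hx y hy) (h x hx y' hy') (h x' hx' y hy)
    (h x' hx' y' hy')

end InnerProductSpace

lemma sum_finrank_le_finrank_of_pairwise_isOrtho {𝕜 E ι : Type*} [RCLike 𝕜]
    [NormedAddCommGroup E] [InnerProductSpace 𝕜 E] [FiniteDimensional 𝕜 E] [Fintype ι]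
    {V : ι → Submodule 𝕜 E} (hV : Pairwise (Function.onFun (· ⟂ ·) V)) :
    ∑ i, finrank 𝕜 (V i) ≤ finrank 𝕜 E := by
  classical
  rw [← finrank_directSum]
  exact LinearMap.finrank_le_finrank_of_injective
    (OrthogonalFamily.of_pairwise hV).independent.dfinsupp_lsum_injective

lemma EuclideanGeometry.Cospherical.finrank_vectorSpan_eq_two {V P : Type*} [NormedAddCommGroup V]
    [InnerProductSpace ℝ V] [MetricSpace P] [NormedAddTorsor V P] {s : Finset P}
    (hs : Cospherical (s : Set P)) (hcard : s.card = 3) :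
    finrank ℝ (vectorSpan ℝ (s : Set P)) = 2 := by
  classical
  obtain ⟨a, b, c, hab, hac, hbc, rfl⟩ := Finset.card_eq_three.mp hcard
  have hind := hs.affineIndependent_of_mem_of_ne (by simp) (by simp) (by simp) hab hac hbc
  have hrange : Set.range ![a, b, c] = (({a, b, c} : Finset P) : Set P) := by
    simp only [Matrix.range_cons, Matrix.range_empty, Set.union_empty, Set.singleton_union,
      Finset.coe_insert, Finset.coe_singleton]
  rw [← hrange]
  exact hind.finrank_vectorSpan (Fintype.card_fin 3)

/-- For every `d ≥ 2`, there do not exist `⌊d/2⌋ + 1` pairwise disjoint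
three-element sets of points of `ℝ^d` such that every two points from distinct
sets are at Euclidean distance exactly 1; equivalently, no distance graph in
`ℝ^d` contains the complete `(⌊d/2⌋+1)`-partite graph `K_{3,…,3}`. -/
theorem no_K33etc_in_distance_graph (d : ℕ) (hd : 2 ≤ d) :
    ¬ ∃ A : Fin (d / 2 + 1) → Finset (EuclideanSpace ℝ (Fin d)),
        (∀ i, (A i).card = 3) ∧
        (∀ i j, i ≠ j → Disjoint (A i) (A j)) ∧
        (∀ i j, i ≠ j → ∀ x ∈ A i, ∀ y ∈ A j, dist x y = 1) := by
  rintro ⟨A, hcard, -, hdist⟩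
  have : Nontrivial (Fin (d / 2 + 1)) := Fin.nontrivial_iff_two_le.mpr (by omega)
  have hcospherical : ∀ i, Cospherical (A i : Set (EuclideanSpace ℝ (Fin d))) := by
    intro i
    obtain ⟨j, hji⟩ := exists_ne i
    obtain ⟨y, hy⟩ := Finset.card_pos.mp (by rw [hcard j]; norm_num : 0 < (A j).card)
    exact ⟨y, 1, fun x hx => hdist i j hji.symm x hx y hy⟩
  have hortho : Pairwise (Function.onFun (· ⟂ ·)
      fun i => vectorSpan ℝ (A i : Set (EuclideanSpace ℝ (Fin d)))) :=
    fun i j hij => vectorSpan_isOrtho_of_forall_dist_eq (hdist i j hij)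
  have hdim := sum_finrank_le_finrank_of_pairwise_isOrtho hortho
  simp only [fun i => (hcospherical i).finrank_vectorSpan_eq_two (hcard i), Finset.sum_const,
    Finset.card_univ, Fintype.card_fin, smul_eq_mul, finrank_euclideanSpace_fin] at hdim
  omega
end

section
/- There do not exist two disjoint sets A, B of points of 3-dimensional Euclidean space, each of cardinality 3, such that every point of A is at Euclidean distance exactly 1 from every point of B. In other words, the complete bipartite graph K_{3,3} is not isomorphic to any distance graph in ℝ³. -/
open RealInnerProductSpace

section Aux

variable {E : Type*} [NormedAddCommGroup E] [InnerProductSpace ℝ E]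

lemma dist_one_expand (x y : E) (h : dist x y = 1) :
    ‖x‖^2 - 2*⟪x,y⟫ + ‖y‖^2 = 1 := by
  have h1 : ‖x - y‖ = 1 := by rwa [dist_eq_norm] at h
  have h2 := norm_sub_sq_real x y
  rw [h1] at h2
  linarith [h2]

lemma inner_diff_zero (a1 a2 b1 b2 : E)
    (h11 : dist a1 b1 = 1) (h12 : dist a1 b2 = 1)
    (h21 : dist a2 b1 = 1) (h22 : dist a2 b2 = 1) :
    ⟪a2 - a1, b2 - b1⟫ = 0 := by
  have e11 := dist_one_expand a1 b1 h11
  have e12 := dist_one_expand a1 b2 h12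
  have e21 := dist_one_expand a2 b1 h21
  have e22 := dist_one_expand a2 b2 h22
  simp only [inner_sub_left, inner_sub_right]
  linarith

/-- Three distinct collinear points cannot all be at distance 1 from a point. -/
lemma no_three_collinear (p1 p2 p3 q : E) (t : ℝ)
    (hne12 : p1 ≠ p2) (hne13 : p1 ≠ p3) (hne23 : p2 ≠ p3)
    (hcol : p3 - p1 = t • (p2 - p1))
    (h1 : dist p1 q = 1) (h2 : dist p2 q = 1) (h3 : dist p3 q = 1) : False := by
  have ht0 : t ≠ 0 := by
    rintro rfl
    rw [zero_smul, sub_eq_zero] at hcol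
    exact hne13 hcol.symm
  have ht1 : t ≠ 1 := by
    rintro rfl
    rw [one_smul, sub_left_inj] at hcol
    exact hne23 hcol.symm
  have e1 := dist_one_expand p1 q h1
  have e2 := dist_one_expand p2 q h2
  have e3 := dist_one_expand p3 q h3
  -- rewrite p2 = p1 + w, p3 = p1 + t • w with w = p2 - p1
  set w := p2 - p1 with hw
  have hp2 : p2 = p1 + w := by rw [hw]; abel
  have hp3 : p3 = p1 + t • w := by rw [← hcol]; abel
  have hn2 : ‖p2‖^2 = ‖p1‖^2 + 2*⟪p1,w⟫ + ‖w‖^2 := by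
    rw [hp2, norm_add_sq_real]; try ring
  have hn3 : ‖p3‖^2 = ‖p1‖^2 + 2*t*⟪p1,w⟫ + t^2*‖w‖^2 := by
    rw [hp3, norm_add_sq_real, norm_smul, real_inner_smul_right, mul_pow,
      Real.norm_eq_abs, sq_abs]
    ring
  have hi2 : ⟪p2, q⟫ = ⟪p1, q⟫ + ⟪w, q⟫ := by rw [hp2, inner_add_left]
  have hi3 : ⟪p3, q⟫ = ⟪p1, q⟫ + t * ⟪w, q⟫ := by
    rw [hp3, inner_add_left, real_inner_smul_left]
  rw [hn2, hi2] at e2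
  rw [hn3, hi3] at e3
  -- e2 : ... ; e3 : ...
  have key : (t - t^2) * ‖w‖^2 = 0 := by linear_combination t*e2 - e3 + (1-t)*e1
  have hwne : w ≠ 0 := sub_ne_zero.mpr hne12.symm
  have hwn : ‖w‖^2 ≠ 0 := pow_ne_zero 2 (norm_ne_zero_iff.mpr hwne)
  have htt : t - t^2 ≠ 0 := by
    intro h
    have : t * (1 - t) = 0 := by ring_nf; linarith [h]
    rcases mul_eq_zero.mp this with h' | h'
    · exact ht0 h'
    · exact ht1 (by linarith)
  exact (mul_ne_zero htt hwn) key

end Aux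

/-- If two pairs of vectors in `ℝ³` are mutually orthogonal, one pair is dependent. -/
lemma dep_of_orth (u2 u3 v2 v3 : EuclideanSpace ℝ (Fin 3))
    (h22 : ⟪u2, v2⟫ = 0) (h23 : ⟪u2, v3⟫ = 0)
    (h32 : ⟪u3, v2⟫ = 0) (h33 : ⟪u3, v3⟫ = 0) :
    ¬ LinearIndependent ℝ ![u2, u3] ∨ ¬ LinearIndependent ℝ ![v2, v3] := by
  by_contra h
  push_neg at h
  obtain ⟨hu, hv⟩ := h
  set U : Submodule ℝ (EuclideanSpace ℝ (Fin 3)) := Submodule.span ℝ (Set.range ![u2, u3])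
  set V : Submodule ℝ (EuclideanSpace ℝ (Fin 3)) := Submodule.span ℝ (Set.range ![v2, v3])
  have hUrank : Module.finrank ℝ U = 2 := by
    rw [finrank_span_eq_card hu]; simp
  have hVrank : Module.finrank ℝ V = 2 := by
    rw [finrank_span_eq_card hv]; simp
  have hVU : V ≤ Uᗮ := by
    rw [Submodule.span_le]
    rintro v hv'
    rw [SetLike.mem_coe, Submodule.mem_orthogonal]
    intro u hu'
    have hbase : ∀ x ∈ Set.range ![u2, u3], ⟪x, v⟫ = 0 := by
      rintro x ⟨i, rfl⟩
      obtain ⟨j, rfl⟩ := hv'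
      fin_cases i <;> fin_cases j <;> simpa using ‹_›
    refine Submodule.span_induction hbase ?_ ?_ ?_ hu'
    · exact inner_zero_left v
    · intro x y _ _ hx hy
      rw [inner_add_left, hx, hy, add_zero]
    · intro c x _ hx
      rw [real_inner_smul_left, hx, mul_zero]
  have h1 : Module.finrank ℝ V ≤ Module.finrank ℝ Uᗮ := Submodule.finrank_mono hVU
  have h2 : Module.finrank ℝ U + Module.finrank ℝ Uᗮ =
      Module.finrank ℝ (EuclideanSpace ℝ (Fin 3)) := Submodule.finrank_add_finrank_orthogonal U
  rw [hUrank, hVrank] at *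
  simp [finrank_euclideanSpace] at h2
  omega

/-- There do not exist two disjoint three-element sets of points of `ℝ³` such
that every point of the first set is at Euclidean distance exactly 1 from every
point of the second set; i.e., `K_{3,3}` is not a distance graph in `ℝ³`. -/
theorem no_K33_in_R3 :
    ¬ ∃ A B : Finset (EuclideanSpace ℝ (Fin 3)),
        A.card = 3 ∧ B.card = 3 ∧ Disjoint A B ∧
        ∀ x ∈ A, ∀ y ∈ B, dist x y = 1 := by
  classical
  rintro ⟨A, B, hA, hB, -, hd⟩
  obtain ⟨a1, a2, a3, ha12, ha13, ha23, rfl⟩ := Finset.card_eq_three.mp hA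
  obtain ⟨b1, b2, b3, hb12, hb13, hb23, rfl⟩ := Finset.card_eq_three.mp hB
  have hmem : ∀ x ∈ ({a1, a2, a3} : Finset (EuclideanSpace ℝ (Fin 3))),
      ∀ y ∈ ({b1, b2, b3} : Finset (EuclideanSpace ℝ (Fin 3))), dist x y = 1 := hd
  have d : ∀ i ∈ [a1,a2,a3], ∀ j ∈ [b1,b2,b3], dist i j = 1 := by
    intro i hi j hj
    apply hmem <;> simp_all [Finset.mem_insert]
  have d11 : dist a1 b1 = 1 := d a1 (by simp) b1 (by simp)
  have d12 : dist a1 b2 = 1 := d a1 (by simp) b2 (by simp)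
  have d13 : dist a1 b3 = 1 := d a1 (by simp) b3 (by simp)
  have d21 : dist a2 b1 = 1 := d a2 (by simp) b1 (by simp)
  have d22 : dist a2 b2 = 1 := d a2 (by simp) b2 (by simp)
  have d23 : dist a2 b3 = 1 := d a2 (by simp) b3 (by simp)
  have d31 : dist a3 b1 = 1 := d a3 (by simp) b1 (by simp)
  have d32 : dist a3 b2 = 1 := d a3 (by simp) b2 (by simp)
  have d33 : dist a3 b3 = 1 := d a3 (by simp) b3 (by simp)
  have o22 : ⟪a2 - a1, b2 - b1⟫ = 0 := inner_diff_zero _ _ _ _ d11 d12 d21 d22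
  have o23 : ⟪a2 - a1, b3 - b1⟫ = 0 := inner_diff_zero _ _ _ _ d11 d13 d21 d23
  have o32 : ⟪a3 - a1, b2 - b1⟫ = 0 := inner_diff_zero _ _ _ _ d11 d12 d31 d32
  have o33 : ⟪a3 - a1, b3 - b1⟫ = 0 := inner_diff_zero _ _ _ _ d11 d13 d31 d33
  rcases dep_of_orth (a2 - a1) (a3 - a1) (b2 - b1) (b3 - b1) o22 o23 o32 o33 with hdep | hdep
  · -- A collinear
    rw [LinearIndependent.pair_iff] at hdep
    push_neg at hdep
    obtain ⟨s, t, hst, hne⟩ := hdep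
    by_cases ht : t = 0
    · subst ht
      simp only [smul_zero, zero_smul, add_zero] at hst
      have hs : s ≠ 0 := by tauto
      have : a2 - a1 = 0 := by
        have := smul_eq_zero.mp hst
        tauto
      exact ha12 (sub_eq_zero.mp this).symm
    · have hcol : a3 - a1 = (-s/t) • (a2 - a1) := by
        have : t • (a3 - a1) = (-s) • (a2 - a1) := by
          rw [neg_smul]
          linear_combination (norm := module) hst
        have h2 : t • (a3 - a1) = t • ((-s/t) • (a2 - a1)) := by
          rw [smul_smul, show t * (-s/t) = -s by field_simp]
          exact this
        exact smul_right_injective _ ht h2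
      exact no_three_collinear a1 a2 a3 b1 (-s/t) ha12 ha13 ha23 hcol d11 d21 d31
  · -- B collinear
    rw [LinearIndependent.pair_iff] at hdep
    push_neg at hdep
    obtain ⟨s, t, hst, hne⟩ := hdep
    by_cases ht : t = 0
    · subst ht
      simp only [smul_zero, zero_smul, add_zero] at hst
      have hs : s ≠ 0 := by tauto
      have : b2 - b1 = 0 := by
        have := smul_eq_zero.mp hst
        tauto
      exact hb12 (sub_eq_zero.mp this).symm
    · have hcol : b3 - b1 = (-s/t) • (b2 - b1) := by
        have : t • (b3 - b1) = (-s) • (b2 - b1) := by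
          rw [neg_smul]
          linear_combination (norm := module) hst
        have h2 : t • (b3 - b1) = t • ((-s/t) • (b2 - b1)) := by
          rw [smul_smul, show t * (-s/t) = -s by field_simp]
          exact this
        exact smul_right_injective _ ht h2
      exact no_three_collinear b1 b2 b3 a1 (-s/t) hb12 hb13 hb23 hcol
        (by rw [dist_comm]; exact d11) (by rw [dist_comm]; exact d12) (by rw [dist_comm]; exact d13)
end

section
/- For all fixed integers r ≥ 2 and l ≥ 2 there exists n₀ ∈ ℕ such that for every n ≥ n₀ the following holds: every family E of r-element subsets of an n-element vertex set with |E| ≥ n^{r − 1/l^{r−1}} contains a complete r-partite r-uniform subhypergraph K^{(r)}(l,…,l); that is, there exist pairwise disjoint l-element sets A₁, …, A_r of vertices such that every r-element set containing exactly one vertex from each A_i belongs to E. -/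
/-!
Erdős's induction on `r`. Let `E` be an `(r+1)`-graph on `n` vertices with `|E| ≥ n^(r+1-δ)`.
The link sizes `d(f)` of the `r`-sets `f` sum to `(r+1)|E|`, so by Jensen
`∑ d(f)^l ≥ (r+1)^l n^(r+l-lδ)`. Since `l! C(d,l) ≥ d^l - C(l,2) d^(l-1)` and `(r+1)^l ≥ l + C(l,2)`,
the pairs `(L, f)` with `L` an `l`-set in the link of `f` number at least `l n^(r+l-lδ) / l!`
(the error is at most `C(l,2) n^(r+l-1)`, absorbed as `lδ ≤ 1`);
averaging over the at most `n^l / l!` sets `L`, some `L` lies in the link of at least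
`l n^(r-lδ)` sets `f`. These form an `r`-graph to which induction applies with `δ` replaced by
`lδ`, and appending `L` as a last part gives `K^(r+1)(l,…,l)` in `E`. With `δ = 1/l^(r-1)` for
an `r`-graph, the descent ends at `1`-graphs with `δ = 1`, where the bound reads `|E| ≥ l`.
-/

open Finset Function
open scoped Nat

theorem Nat.pow_le_descFactorial_add_choose_two_mul (n : ℕ) :
    ∀ k, n ^ k ≤ n.descFactorial k + k.choose 2 * n ^ (k - 1)
  | 0 => by simp
  | k + 1 => by
    have ih := Nat.pow_le_descFactorial_add_choose_two_mul n k
    have hdesc : n * n.descFactorial k ≤ n.descFactorial (k + 1) + k * n ^ k := by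
      rw [Nat.descFactorial_succ]
      have := Nat.descFactorial_le_pow n k
      calc n * n.descFactorial k ≤ (n - k + k) * n.descFactorial k := by gcongr; omega
        _ ≤ _ := by rw [add_mul]; gcongr
    have hpow : n * (k.choose 2 * n ^ (k - 1)) = k.choose 2 * n ^ k := by
      rcases k with _ | k
      · simp
      · rw [Nat.add_sub_cancel, pow_succ]; ring
    rw [Nat.choose_succ_succ', Nat.choose_one_right, Nat.add_sub_cancel, pow_succ']
    nlinarith

theorem Nat.add_choose_two_le_two_pow : ∀ l : ℕ, l + l.choose 2 ≤ 2 ^ l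
  | 0 => by simp
  | l + 1 => by
    have := Nat.add_choose_two_le_two_pow l
    have := Nat.lt_two_pow_self (n := l)
    have : (l + 1).choose 2 = l + l.choose 2 := Nat.choose_succ_succ' l 1 ▸ by simp
    omega

namespace Hypergraph

variable {α : Type*} [DecidableEq α]

/-- The parts `A i` span a copy of `K^{(r)}(l,…,l)` in `E`. -/
structure IsCompletePartiteIn (E : Finset (Finset α)) (l : ℕ) {r : ℕ} (A : Fin r → Finset α) :
    Prop where
  card_eq : ∀ i, #(A i) = l
  pairwise_disjoint : Pairwise (Disjoint on A)
  mem : ∀ e : Finset α, #e = r → (∀ i, #(e ∩ A i) = 1) → e ∈ E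

theorem IsCompletePartiteIn.exists_mem_of_mem {E : Finset (Finset α)} {l r : ℕ}
    {A : Fin r → Finset α} (hA : IsCompletePartiteIn E l A) {i : Fin r} {v : α} (hv : v ∈ A i) : ∃ e ∈ E, v ∈ e := by
  have hpart : ∀ j, ∃ x ∈ A j, j = i → x = v := by
    intro j
    by_cases hj : j = i
    · exact ⟨v, hj ▸ hv, fun _ => rfl⟩
    · obtain ⟨x, hx⟩ : (A j).Nonempty := by
        rw [← card_pos, hA.card_eq, ← hA.card_eq i]
        exact card_pos.2 ⟨v, hv⟩
      exact ⟨x, hx, fun h => absurd h hj⟩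
  choose g hgA hgi using hpart
  have hg : Function.Injective g := fun j k hjk => by
    by_contra hne
    exact disjoint_left.1 (hA.pairwise_disjoint hne) (hgA j) (hjk ▸ hgA k)
  have hinter : ∀ j, univ.image g ∩ A j = {g j} := by
    intro j
    ext x
    simp only [mem_inter, mem_image, mem_univ, true_and, mem_singleton]
    constructor
    · rintro ⟨⟨k, rfl⟩, hk⟩
      by_contra hne
      exact disjoint_left.1 (hA.pairwise_disjoint fun h => hne (congrArg g h)) (hgA k) hk
    · rintro rfl
      exact ⟨⟨j, rfl⟩, hgA j⟩
  have hcard : #(univ.image g) = r := by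
    rw [card_image_of_injective _ hg, card_univ, Fintype.card_fin]
  exact ⟨univ.image g, hA.mem _ hcard fun j => by rw [hinter, card_singleton],
    mem_image.2 ⟨i, mem_univ _, hgi i rfl⟩⟩

theorem exists_isCompletePartiteIn_one {E : Finset (Finset α)} {l : ℕ} (hE : ∀ e ∈ E, #e = 1)
    (hl : l ≤ #E) :
    ∃ A : Fin 1 → Finset α, IsCompletePartiteIn E l A := by
  have hvert : l ≤ #(E.biUnion id) := by
    refine hl.trans ((card_le_card fun e he => ?_).trans_eq
      ((card_powersetCard 1 _).trans (Nat.choose_one_right _)))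
    exact mem_powersetCard.2 ⟨subset_biUnion_of_mem id he, hE e he⟩
  obtain ⟨B, hB, hBl⟩ := exists_subset_card_eq hvert
  refine ⟨fun _ => B, fun _ => hBl, Subsingleton.pairwise, fun e he hmeet => ?_⟩
  obtain ⟨a, rfl⟩ := card_eq_one.1 he
  have haB : a ∈ B := by
    by_contra h
    simpa [singleton_inter_of_notMem h] using hmeet 0
  obtain ⟨e', he', hae'⟩ := mem_biUnion.1 (hB haB)
  obtain ⟨b, rfl⟩ := card_eq_one.1 (hE e' he')
  obtain rfl : a = b := by simpa using hae'
  exact he'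

variable [Fintype α]

def link (E : Finset (Finset α)) (f : Finset α) : Finset α :=
  {v | v ∉ f ∧ insert v f ∈ E}

def commonLink (E : Finset (Finset α)) (r : ℕ) (L : Finset α) : Finset (Finset α) :=
  {f ∈ powersetCard r univ | L ⊆ link E f}

variable {E : Finset (Finset α)} {l r : ℕ}

@[simp]
theorem mem_link {f : Finset α} {v : α} : v ∈ link E f ↔ v ∉ f ∧ insert v f ∈ E := by
  simp [link]

@[simp]
theorem mem_commonLink {L f : Finset α} : f ∈ commonLink E r L ↔ #f = r ∧ L ⊆ link E f := by
  simp [commonLink, mem_powersetCard]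

theorem card_of_mem_commonLink {L f : Finset α} (hf : f ∈ commonLink E r L) : #f = r :=
  (mem_commonLink.1 hf).1

theorem sum_card_link (hE : ∀ e ∈ E, #e = r + 1) :
    ∑ f ∈ powersetCard r univ, #(link E f) = (r + 1) * #E := by
  have hsigma : #((powersetCard r univ).sigma (link E)) = #(E.sigma fun e => e) := by
    refine card_nbij' (fun p => ⟨insert p.2 p.1, p.2⟩) (fun p => ⟨p.1.erase p.2, p.2⟩)
      ?_ ?_ ?_ ?_
    · rintro ⟨f, v⟩ h
      simp only [coe_sigma, Set.mem_sigma_iff, mem_coe, mem_link] at h ⊢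
      exact ⟨h.2.2, mem_insert_self _ _⟩
    · rintro ⟨e, v⟩ h
      simp only [coe_sigma, Set.mem_sigma_iff, mem_coe, mem_link, mem_powersetCard] at h ⊢
      rw [insert_erase h.2, card_erase_of_mem h.2, hE e h.1, Nat.add_sub_cancel]
      exact ⟨⟨subset_univ _, rfl⟩, notMem_erase _ _, h.1⟩
    · rintro ⟨f, v⟩ h
      simp only [coe_sigma, Set.mem_sigma_iff, mem_coe, mem_link] at h
      simp [erase_insert h.2.1]
    · rintro ⟨e, v⟩ h
      simp only [coe_sigma, Set.mem_sigma_iff, mem_coe] at h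
      simp [insert_erase h.2]
  rw [card_sigma, card_sigma] at hsigma
  rw [hsigma, sum_const_nat hE, mul_comm]

theorem sum_card_commonLink (E : Finset (Finset α)) (r l : ℕ) :
    ∑ L ∈ powersetCard l univ, #(commonLink E r L)
      = ∑ f ∈ powersetCard r univ, (#(link E f)).choose l := by
  calc _ = ∑ f ∈ powersetCard r univ, #((powersetCard l univ).bipartiteBelow (· ⊆ link E ·) f) :=
        sum_card_bipartiteAbove_eq_sum_card_bipartiteBelow _
    _ = _ := sum_congr rfl fun f _ => by
        rw [← card_powersetCard]
        congr 1
        ext L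
        simp [mem_powersetCard, and_comm]

variable (E) in
theorem sum_pow_card_link_le :
    ∑ f ∈ powersetCard r univ, #(link E f) ^ l
      ≤ l ! * ∑ L ∈ powersetCard l univ, #(commonLink E r L)
        + l.choose 2 * Fintype.card α ^ (l - 1) * (Fintype.card α).choose r := by
  rw [sum_card_commonLink, mul_sum, mul_comm _ ((Fintype.card α).choose r), ← card_univ,
    ← card_powersetCard, ← smul_eq_mul, ← sum_const, ← sum_add_distrib]
  refine sum_le_sum fun f _ => ?_
  have hd : #(link E f) ≤ #(univ : Finset α) := card_le_univ _
  rw [← Nat.descFactorial_eq_factorial_mul_choose]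
  calc #(link E f) ^ l ≤ (#(link E f)).descFactorial l + l.choose 2 * #(link E f) ^ (l - 1) :=
        Nat.pow_le_descFactorial_add_choose_two_mul _ _
    _ ≤ _ := by gcongr

theorem pow_mul_pow_le_sum_card_link_pow [Nonempty α] {δ : ℝ} (hl : 1 ≤ l)
    (hE : ∀ e ∈ E, #e = r + 1) (hcard : (Fintype.card α : ℝ) ^ ((r + 1 : ℝ) - δ) ≤ #E) :
    ((r + 1) ^ l * Fintype.card α ^ ((r : ℝ) - l * δ) * Fintype.card α ^ l : ℝ)
      ≤ ∑ f ∈ powersetCard r univ, (#(link E f) : ℝ) ^ l := by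
  set n : ℝ := (Fintype.card α : ℝ) with hn_def
  have hn : 0 < n := by rw [hn_def]; exact_mod_cast Fintype.card_pos
  obtain ⟨k, rfl⟩ : ∃ k, l = k + 1 := ⟨l - 1, by omega⟩
  have hexp : (n ^ ((r + 1 : ℝ) - δ)) ^ (k + 1)
      = n ^ (r * k) * (n ^ ((r : ℝ) - (k + 1 : ℕ) * δ) * n ^ (k + 1)) := by
    simp only [← Real.rpow_natCast, ← Real.rpow_mul hn.le, ← Real.rpow_add hn]
    congr 1
    push_cast
    ring
  have hN : ((Fintype.card α).choose r : ℝ) ^ k ≤ n ^ (r * k) := by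
    rw [pow_mul, hn_def]
    exact pow_le_pow_left₀ (by positivity) (by exact_mod_cast Nat.choose_le_pow _ _) k
  have hjensen := pow_sum_le_card_mul_sum_pow (s := powersetCard r univ)
    (f := fun f => (#(link E f) : ℝ)) (fun _ _ => by positivity) k
  rw [card_powersetCard, card_univ] at hjensen
  have hlink : ∑ f ∈ powersetCard r univ, (#(link E f) : ℝ) = (r + 1) * #E := by
    exact_mod_cast sum_card_link hE
  refine le_of_mul_le_mul_left ?_ (by positivity : 0 < n ^ (r * k))
  calc n ^ (r * k) * ((r + 1) ^ (k + 1) * n ^ ((r : ℝ) - (k + 1 : ℕ) * δ) * n ^ (k + 1))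
      = ((r + 1) * n ^ ((r + 1 : ℝ) - δ)) ^ (k + 1) := by rw [mul_pow, hexp]; ring
    _ ≤ ((r + 1) * #E) ^ (k + 1) := by gcongr
    _ ≤ ((Fintype.card α).choose r) ^ k
          * ∑ f ∈ powersetCard r univ, (#(link E f) : ℝ) ^ (k + 1) := by
      rw [← hlink]; exact hjensen
    _ ≤ _ := mul_le_mul_of_nonneg_right hN (sum_nonneg fun _ _ => by positivity)

theorem mul_pow_mul_pow_le_factorial_mul_sum_card_commonLink [Nonempty α] {δ : ℝ}
    (hr : 1 ≤ r) (hl : 1 ≤ l) (hδ : l * δ ≤ 1)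
    (hE : ∀ e ∈ E, #e = r + 1) (hcard : (Fintype.card α : ℝ) ^ ((r + 1 : ℝ) - δ) ≤ #E) :
    (l : ℝ) * Fintype.card α ^ ((r : ℝ) - l * δ) * Fintype.card α ^ l
      ≤ l ! * ∑ L ∈ powersetCard l univ, (#(commonLink E r L) : ℝ) := by
  set n : ℝ := (Fintype.card α : ℝ) with hn_def
  have hn : 1 ≤ n := by rw [hn_def]; exact_mod_cast Fintype.card_pos
  set Y := n ^ ((r : ℝ) - l * δ)
  have hnoise : (l.choose 2 : ℝ) * n ^ (l - 1) * (Fintype.card α).choose r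
      ≤ l.choose 2 * (Y * n ^ l) := by
    have hN : ((Fintype.card α).choose r : ℝ) ≤ n ^ r := by
      rw [hn_def]; exact_mod_cast Nat.choose_le_pow _ _
    have hexp : n ^ (l - 1) * n ^ r ≤ Y * n ^ l := by
      simp only [Y, ← Real.rpow_natCast, ← Real.rpow_add (by positivity : 0 < n)]
      refine Real.rpow_le_rpow_of_exponent_le hn ?_
      push_cast [Nat.cast_sub hl]
      linarith
    rw [mul_assoc]
    exact mul_le_mul_of_nonneg_left
      ((mul_le_mul_of_nonneg_left hN (by positivity)).trans hexp) (by positivity)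
  have hsum : ∑ f ∈ powersetCard r univ, (#(link E f) : ℝ) ^ l
      ≤ l ! * ∑ L ∈ powersetCard l univ, (#(commonLink E r L) : ℝ)
        + l.choose 2 * n ^ (l - 1) * (Fintype.card α).choose r := by
    rw [hn_def]; exact_mod_cast sum_pow_card_link_le E
  have hconst : (l : ℝ) + l.choose 2 ≤ (r + 1) ^ l := by
    exact_mod_cast (Nat.add_choose_two_le_two_pow _).trans (Nat.pow_le_pow_left (by omega) _)
  have hjensen := pow_mul_pow_le_sum_card_link_pow hl hE hcard
  have hYn : 0 ≤ Y * n ^ l := by positivity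
  nlinarith

theorem exists_le_card_commonLink [Nonempty α] {δ : ℝ} (hr : 1 ≤ r) (hl : 1 ≤ l) (hδ : l * δ ≤ 1)
    (hE : ∀ e ∈ E, #e = r + 1) (hcard : (Fintype.card α : ℝ) ^ ((r + 1 : ℝ) - δ) ≤ #E) :
    ∃ L ∈ powersetCard l univ,
      (l : ℝ) * Fintype.card α ^ ((r : ℝ) - l * δ) ≤ #(commonLink E r L) := by
  have hsum := mul_pow_mul_pow_le_factorial_mul_sum_card_commonLink hr hl hδ hE hcard
  set X := (l : ℝ) * Fintype.card α ^ ((r : ℝ) - l * δ)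
  have hpos : 0 < X * Fintype.card α ^ l := by
    have : 0 < l := hl
    positivity
  have hne : (powersetCard l (univ : Finset α)).Nonempty := by
    by_contra h
    rw [not_nonempty_iff_eq_empty.1 h, sum_empty] at hsum
    linarith
  refine exists_le_of_sum_le hne ?_
  rw [sum_const, card_powersetCard, card_univ, nsmul_eq_mul]
  have hchoose : (l ! : ℝ) * (Fintype.card α).choose l ≤ Fintype.card α ^ l := by
    have := Nat.descFactorial_le_pow (Fintype.card α) l
    rw [Nat.descFactorial_eq_factorial_mul_choose] at this
    exact_mod_cast this
  have hX : 0 ≤ X := by positivity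
  have hfac : (0 : ℝ) < l ! := by exact_mod_cast Nat.factorial_pos l
  nlinarith

theorem IsCompletePartiteIn.snoc_commonLink {A : Fin r → Finset α} {L : Finset α} (hL : #L = l)
    (hA : IsCompletePartiteIn (commonLink E r L) l A) :
    IsCompletePartiteIn E l (Fin.snoc A L : Fin (r + 1) → Finset α) := by
  have hAL : ∀ i, Disjoint (A i) L := fun i => disjoint_left.2 fun v hvA hvL => by
    obtain ⟨f, hf, hvf⟩ := hA.exists_mem_of_mem hvA
    exact (mem_link.1 ((mem_commonLink.1 hf).2 hvL)).1 hvf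
  refine ⟨fun i => ?_, ?_, fun e he hmeet => ?_⟩
  · refine Fin.lastCases ?_ (fun i => ?_) i <;> simp [hL, hA.card_eq]
  · simp only [Pairwise, Fin.forall_fin_succ', onFun, Fin.snoc_castSucc, Fin.snoc_last]
    exact ⟨fun i => ⟨fun j hij => hA.pairwise_disjoint fun h => hij (h ▸ rfl), fun _ => hAL i⟩,
      fun i _ => (hAL i).symm, fun h => absurd rfl h⟩
  · obtain ⟨v, hv⟩ := card_eq_one.1 (by simpa using hmeet (Fin.last r))
    obtain ⟨hve, hvL⟩ := mem_inter.1 (hv ▸ mem_singleton_self v)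
    have hf : e.erase v ∈ commonLink E r L := by
      refine hA.mem _ (by rw [card_erase_of_mem hve, he, Nat.add_sub_cancel]) fun i => ?_
      have hvA : v ∉ e ∩ A i := fun h => disjoint_left.1 (hAL i) (mem_inter.1 h).2 hvL
      rw [erase_inter, erase_eq_of_notMem hvA]
      simpa using hmeet i.castSucc
    simpa [insert_erase hve] using (mem_link.1 ((mem_commonLink.1 hf).2 hvL)).2

theorem exists_isCompletePartiteIn_succ [Nonempty α] (hr : 1 ≤ r) (hl : 1 ≤ l)
    (ih : ∀ E' : Finset (Finset α), (∀ f ∈ E', #f = r) →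
      (l : ℝ) * Fintype.card α ^ ((r : ℝ) - 1 / l ^ (r - 1)) ≤ #E' →
        ∃ A : Fin r → Finset α, IsCompletePartiteIn E' l A)
    (hE : ∀ e ∈ E, #e = r + 1) (hcard : (Fintype.card α : ℝ) ^ ((r + 1 : ℝ) - 1 / l ^ r) ≤ #E) :
    ∃ A : Fin (r + 1) → Finset α, IsCompletePartiteIn E l A := by
  have hl1 : (1 : ℝ) ≤ l := by exact_mod_cast hl
  have hδ : (l : ℝ) * (1 / l ^ r) = 1 / l ^ (r - 1) := by
    rw [← Nat.sub_add_cancel hr, pow_succ]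
    field_simp
    simp
  have hδ1 : (l : ℝ) * (1 / l ^ r) ≤ 1 :=
    hδ.le.trans (div_le_one_of_le₀ (one_le_pow₀ hl1) (by positivity))
  obtain ⟨L, hL, hlarge⟩ := exists_le_card_commonLink hr hl hδ1 hE hcard
  rw [hδ] at hlarge
  obtain ⟨A, hA⟩ := ih _ (fun f hf => card_of_mem_commonLink hf) hlarge
  exact ⟨_, hA.snoc_commonLink (mem_powersetCard.1 hL).2⟩

theorem exists_isCompletePartiteIn [Nonempty α] (hl : 1 ≤ l) (hr : 1 ≤ r) :
    ∀ E : Finset (Finset α), (∀ e ∈ E, #e = r) →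
      (l : ℝ) * Fintype.card α ^ ((r : ℝ) - 1 / l ^ (r - 1)) ≤ #E →
        ∃ A : Fin r → Finset α, IsCompletePartiteIn E l A := by
  induction r, hr using Nat.le_induction with
  | base => exact fun E hE hcard => exists_isCompletePartiteIn_one hE (by simpa using hcard)
  | succ r hr ih =>
    refine fun E hE hcard => exists_isCompletePartiteIn_succ hr hl ih hE ?_
    refine le_trans (le_mul_of_one_le_left (by positivity) (by exact_mod_cast hl : (1 : ℝ) ≤ l)) ?_
    simpa using hcard

end Hypergraph

/-- Erdős' theorem: for fixed `r, l ≥ 2` there is `n₀` such that for all `n ≥ n₀`,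
every `r`-uniform hypergraph on `n` vertices with at least `n ^ (r - 1/l^(r-1))`
edges contains a complete `r`-partite `r`-uniform subhypergraph `K^{(r)}(l,…,l)`. -/
theorem erdos_hypergraph_Kpartite (r l : ℕ) (hr : 2 ≤ r) (hl : 2 ≤ l) :
    ∃ n₀ : ℕ, ∀ n : ℕ, n₀ ≤ n →
      ∀ E : Finset (Finset (Fin n)), (∀ e ∈ E, e.card = r) →
        (n : ℝ) ^ ((r : ℝ) - 1 / (l : ℝ) ^ (r - 1)) ≤ (E.card : ℝ) →
        ∃ A : Fin r → Finset (Fin n),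
          (∀ i, (A i).card = l) ∧
          (∀ i j, i ≠ j → Disjoint (A i) (A j)) ∧
          ∀ e : Finset (Fin n), e.card = r → (∀ i, (e ∩ A i).card = 1) → e ∈ E := by
  refine ⟨1, fun n hn E hE hcard => ?_⟩
  have : Nonempty (Fin n) := Fin.pos_iff_nonempty.1 hn
  obtain ⟨s, rfl⟩ : ∃ s, r = s + 1 := ⟨r - 1, by omega⟩
  obtain ⟨A, hA⟩ := Hypergraph.exists_isCompletePartiteIn_succ (l := l) (by omega) (by omega)
    (Hypergraph.exists_isCompletePartiteIn (by omega) (by omega)) hE (by simpa using hcard)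
  exact ⟨A, hA.card_eq, fun i j hij => hA.pairwise_disjoint hij, hA.mem⟩
end

section
/- For all fixed integers r ≥ 2 and l ≥ 2 there exist a real ε > 0 and n₀ ∈ ℕ such that the following holds: if G is a simple graph on n ≥ n₀ vertices that contains no subgraph isomorphic to the complete r-partite graph K_{l,…,l} with all r parts of size l (i.e., there are no r pairwise disjoint l-element vertex sets with all cross pairs adjacent), then the number of r-cliques of G is at most n^{r−ε}. -/
open Finset Function
open scoped Nat

lemma pow_sum_sub_le_mul_sum_choose {ι : Type*} (s : Finset ι) (d : ι → ℕ) {l : ℕ} (hl : 0 < l)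
    (hs : 0 ≤ ∑ i ∈ s, ((d i : ℝ) - l)) :
    (∑ i ∈ s, ((d i : ℝ) - l)) ^ l ≤ l ! * #s ^ (l - 1) * ∑ i ∈ s, ((d i).choose l : ℝ) := by
  obtain ⟨k, rfl⟩ : ∃ k, l = k + 1 := ⟨l - 1, by omega⟩
  calc (∑ i ∈ s, ((d i : ℝ) - (k + 1 : ℕ))) ^ (k + 1)
      ≤ (∑ i ∈ s, ((d i + 1 - (k + 1) : ℕ) : ℝ)) ^ (k + 1) := by
        refine pow_le_pow_left₀ hs (sum_le_sum fun i _ => ?_) _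
        rw [sub_le_iff_le_add]
        exact_mod_cast (by omega : d i ≤ d i + 1 - (k + 1) + (k + 1))
    _ ≤ #s ^ k * ∑ i ∈ s, ((d i + 1 - (k + 1) : ℕ) : ℝ) ^ (k + 1) :=
        pow_sum_le_card_mul_sum_pow (fun _ _ => by positivity) k
    _ ≤ #s ^ k * ∑ i ∈ s, (k + 1)! * ((d i).choose (k + 1) : ℝ) := by
        gcongr with i
        rw [← div_le_iff₀' (by positivity)]
        exact Nat.pow_le_choose (k + 1) (d i)
    _ = (k + 1)! * #s ^ (k + 1 - 1) * ∑ i ∈ s, ((d i).choose (k + 1) : ℝ) := by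
        rw [← mul_sum, Nat.add_sub_cancel]
        ring

namespace Finset

variable {V : Type*} [DecidableEq V] {H : Finset (Finset V)} {r l : ℕ}

lemma image_univ_fin_succ (g : Fin (r + 1) → V) :
    univ.image g = insert (g 0) (univ.image (Fin.tail g)) := by
  rw [Fin.univ_succ, cons_eq_insert, image_insert, map_eq_image, image_image]
  rfl

variable [Fintype V]

-- `H` contains the complete `r`-partite `r`-graph `K⁽ʳ⁾(l, …, l)` with parts `A i`.
def HasBox (H : Finset (Finset V)) (r l : ℕ) : Prop :=
  ∃ A : Fin r → Finset V, (∀ i, #(A i) = l) ∧ Pairwise (Disjoint on A) ∧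
    ∀ g : Fin r → V, (∀ i, g i ∈ A i) → univ.image g ∈ H

def extensions (H : Finset (Finset V)) (T : Finset V) : Finset V :=
  {v | v ∉ T ∧ insert v T ∈ H}

def link (H : Finset (Finset V)) (r : ℕ) (L : Finset V) : Finset (Finset V) :=
  {T ∈ powersetCard r univ | L ⊆ H.extensions T}

@[simp]
lemma mem_extensions {T : Finset V} {v : V} : v ∈ H.extensions T ↔ v ∉ T ∧ insert v T ∈ H := by
  simp [extensions]

@[simp]
lemma mem_link {L T : Finset V} : T ∈ H.link r L ↔ #T = r ∧ L ⊆ H.extensions T := by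
  simp [link]

lemma filter_powersetCard_univ_subset (r : ℕ) (S : Finset V) :
    {T ∈ powersetCard r (univ : Finset V) | T ⊆ S} = powersetCard r S := by
  ext T
  simp [mem_powersetCard, and_comm]

lemma card_extensions (hH : ∀ S ∈ H, #S = r + 1) {T : Finset V} (hT : #T = r) :
    #(H.extensions T) = #{S ∈ H | T ⊆ S} := by
  refine card_nbij (insert · T) (fun v hv => ?_) ((insert_inj_on T).mono fun v hv => ?_)
    fun S hS => ?_
  · simp_all [subset_insert]
  · simp_all
  · simp only [coe_filter] at hS
    obtain ⟨v, hvT, rfl⟩ := exists_eq_insert_iff.2 ⟨hS.2, by rw [hT, hH S hS.1]⟩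
    exact ⟨v, by simpa using ⟨hvT, hS.1⟩, rfl⟩

lemma sum_card_extensions (hH : ∀ S ∈ H, #S = r + 1) :
    ∑ T ∈ powersetCard r univ, #(H.extensions T) = (r + 1) * #H := by
  calc ∑ T ∈ powersetCard r univ, #(H.extensions T)
      = ∑ T ∈ powersetCard r univ, #{S ∈ H | T ⊆ S} :=
        sum_congr rfl fun T hT => card_extensions hH (mem_powersetCard_univ.1 hT)
    _ = ∑ S ∈ H, #{T ∈ powersetCard r univ | T ⊆ S} :=
        sum_card_bipartiteAbove_eq_sum_card_bipartiteBelow _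
    _ = ∑ S ∈ H, (r + 1) := sum_congr rfl fun S hS => by
        rw [filter_powersetCard_univ_subset, card_powersetCard, hH S hS, Nat.choose_succ_self_right]
    _ = (r + 1) * #H := by rw [sum_const, smul_eq_mul, mul_comm]

lemma sum_card_link (r l : ℕ) :
    ∑ L ∈ powersetCard l univ, #(H.link r L) =
      ∑ T ∈ powersetCard r univ, (#(H.extensions T)).choose l := by
  calc ∑ L ∈ powersetCard l univ, #(H.link r L)
      = ∑ T ∈ powersetCard r univ, #{L ∈ powersetCard l univ | L ⊆ H.extensions T} :=
        (sum_card_bipartiteAbove_eq_sum_card_bipartiteBelow _).symm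
    _ = ∑ T ∈ powersetCard r univ, (#(H.extensions T)).choose l := sum_congr rfl fun T _ => by
        rw [filter_powersetCard_univ_subset, card_powersetCard]

lemma not_hasBox_link (hl : 0 < l) (hH : ¬ H.HasBox (r + 1) l) {L : Finset V} (hL : #L = l) :
    ¬ (H.link r L).HasBox r l := by
  rintro ⟨A, hA, hAdisj, hAlink⟩
  choose g₀ hg₀ using fun i => card_pos.1 (hA i ▸ hl)
  -- every vertex of a part lies in a transversal, and `L` avoids the transversals it extends
  have hLA : ∀ i, Disjoint L (A i) := by
    refine fun i => disjoint_left.2 fun a haL haA => ?_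
    have hg := hAlink _ ((forall_update_iff g₀ fun k x => x ∈ A k).2 ⟨haA, fun k _ => hg₀ k⟩)
    exact (mem_extensions.1 ((mem_link.1 hg).2 haL)).1
      (mem_image.2 ⟨i, mem_univ i, update_self ..⟩)
  refine hH ⟨Fin.cons L A, Fin.cons hL hA, fun i j hij => ?_, fun g hg => ?_⟩
  · cases i using Fin.cases <;> cases j using Fin.cases
    · exact absurd rfl hij
    · exact hLA _
    · exact (hLA _).symm
    · exact hAdisj fun h => hij (congrArg _ h)
  · have hT := (mem_link.1 (hAlink (Fin.tail g) fun i => hg i.succ)).2 (hg 0)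
    rw [image_univ_fin_succ]
    exact (mem_extensions.1 hT).2

lemma card_sub_pow_le_of_card_link_le (hl : 0 < l) (hH : ∀ S ∈ H, #S = r + 1) {M : ℝ}
    (hM0 : 0 ≤ M) (hM : ∀ L : Finset V, #L = l → (#(H.link r L) : ℝ) ≤ M)
    (hX : (l : ℝ) * Fintype.card V ^ r ≤ #H) :
    ((#H : ℝ) - l * Fintype.card V ^ r) ^ l ≤ l ! * Fintype.card V ^ (r * (l - 1) + l) * M := by
  set n := Fintype.card V
  set d : Finset V → ℕ := fun T => #(H.extensions T)
  have hcard (k : ℕ) : (#(powersetCard k (univ : Finset V)) : ℝ) ≤ n ^ k := by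
    rw [card_powersetCard, card_univ]
    exact_mod_cast Nat.choose_le_pow n k
  have hsum : (#H : ℝ) - l * n ^ r ≤ ∑ T ∈ powersetCard r univ, ((d T : ℝ) - l) := by
    have hd : ∑ T ∈ powersetCard r univ, (d T : ℝ) = (r + 1) * #H :=
      mod_cast sum_card_extensions hH
    rw [sum_sub_distrib, sum_const, nsmul_eq_mul, hd]
    nlinarith [hcard r, (#H).cast_nonneg (α := ℝ), r.cast_nonneg (α := ℝ), l.cast_nonneg (α := ℝ)]
  calc ((#H : ℝ) - l * n ^ r) ^ l
      ≤ (∑ T ∈ powersetCard r univ, ((d T : ℝ) - l)) ^ l :=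
        pow_le_pow_left₀ (sub_nonneg.2 hX) hsum l
    _ ≤ l ! * #(powersetCard r univ) ^ (l - 1) *
          ∑ T ∈ powersetCard r univ, ((d T).choose l : ℝ) :=
        pow_sum_sub_le_mul_sum_choose _ _ hl ((sub_nonneg.2 hX).trans hsum)
    _ = l ! * #(powersetCard r univ) ^ (l - 1) *
          ∑ L ∈ powersetCard l univ, (#(H.link r L) : ℝ) := by
        rw [← Nat.cast_sum, ← Nat.cast_sum, sum_card_link]
    _ ≤ l ! * (n ^ r) ^ (l - 1) * (n ^ l * M) := by
        gcongr
        · exact hcard r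
        · refine (sum_le_card_nsmul _ _ M fun L hL => hM L (mem_powersetCard_univ.1 hL)).trans ?_
          rw [nsmul_eq_mul]
          exact mul_le_mul_of_nonneg_right (hcard l) hM0
    _ = l ! * n ^ (r * (l - 1) + l) * M := by ring

end Finset

lemma le_rpow_of_sub_pow_le {n X δ : ℝ} {r l : ℕ} (hl : 0 < l) (hn : 1 ≤ n) (hδ : δ ≤ 1)
    (h2l : 2 * l ≤ n ^ (1 / 2 : ℝ)) (hconst : 2 ^ l * l ! ≤ n ^ (δ / 2))
    (h : l * n ^ r ≤ X → (X - l * n ^ r) ^ l ≤ l ! * n ^ (r * (l - 1) + l) * n ^ ((r : ℝ) - δ)) :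
    X ≤ n ^ ((r : ℝ) + 1 - δ / (2 * l)) := by
  have hn0 : 0 < n := by linarith
  have hlR : (1 : ℝ) ≤ l := by exact_mod_cast hl
  by_contra! hX
  have hexp : (r : ℝ) + 1 / 2 ≤ r + 1 - δ / (2 * l) := by
    have : δ / (2 * l) ≤ 1 / 2 := by
      rw [div_le_div_iff₀ (by positivity) (by norm_num)]
      linarith
    linarith
  have hbig : 2 * (l * n ^ r) ≤ X := calc
    2 * (l * n ^ r) ≤ n ^ (r : ℝ) * n ^ (1 / 2 : ℝ) := by
      rw [Real.rpow_natCast]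
      nlinarith [pow_pos hn0 r]
    _ = n ^ ((r : ℝ) + 1 / 2) := (Real.rpow_add hn0 _ _).symm
    _ ≤ n ^ ((r : ℝ) + 1 - δ / (2 * l)) := Real.rpow_le_rpow_of_exponent_le hn hexp
    _ ≤ X := hX.le
  have hpos : 0 ≤ (l : ℝ) * n ^ r := by positivity
  have hupper : X ^ l ≤ (n ^ ((r : ℝ) + 1 - δ / (2 * l))) ^ l := calc
    X ^ l = 2 ^ l * (X / 2) ^ l := by rw [div_pow]; field_simp
    _ ≤ 2 ^ l * (X - l * n ^ r) ^ l := by gcongr <;> linarith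
    _ ≤ 2 ^ l * (l ! * n ^ (r * (l - 1) + l) * n ^ ((r : ℝ) - δ)) := by
      gcongr; exact h (by linarith)
    _ = 2 ^ l * l ! * (n ^ (r * (l - 1) + l) * n ^ ((r : ℝ) - δ)) := by ring
    _ ≤ n ^ (δ / 2) * (n ^ (r * (l - 1) + l) * n ^ ((r : ℝ) - δ)) := by gcongr
    _ = (n ^ ((r : ℝ) + 1 - δ / (2 * l))) ^ l := by
      rw [← Real.rpow_natCast, ← Real.rpow_add hn0, ← Real.rpow_add hn0,
        ← Real.rpow_mul_natCast hn0.le]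
      congr 1
      push_cast [Nat.cast_sub hl]
      field_simp
      ring
  exact (pow_lt_pow_left₀ hX (by positivity) hl.ne').not_ge hupper

open Filter in
theorem Finset.card_le_rpow_of_not_hasBox {l : ℕ} (hl : 0 < l) (r : ℕ) :
    ∃ n₀ : ℕ, ∀ (V : Type*) [Fintype V] [DecidableEq V] (H : Finset (Finset V)),
      n₀ ≤ Fintype.card V → (∀ S ∈ H, #S = r) → ¬ H.HasBox r l →
      (#H : ℝ) ≤ (Fintype.card V : ℝ) ^ ((r : ℝ) - ((2 * l : ℝ) ^ r)⁻¹) := by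
  induction r with
  | zero =>
    refine ⟨0, fun V _ _ H _ hH hbox => ?_⟩
    have hH : H = ∅ := eq_empty_of_forall_notMem fun S hS =>
      hbox ⟨finZeroElim, finZeroElim, finZeroElim, fun g _ => by
        rwa [univ_eq_empty, image_empty, ← card_eq_zero.1 (hH S hS)]⟩
    rw [hH, card_empty, Nat.cast_zero]
    positivity
  | succ r ih =>
    obtain ⟨n₀, ih⟩ := ih
    set δ : ℝ := ((2 * l : ℝ) ^ r)⁻¹
    have hlR : (1 : ℝ) ≤ l := by exact_mod_cast hl
    have hδ : δ ≤ 1 := inv_le_one_of_one_le₀ (one_le_pow₀ (by linarith))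
    have hrpow {c : ℝ} (hc : 0 < c) := (tendsto_rpow_atTop hc).comp tendsto_natCast_atTop_atTop
    obtain ⟨n₁, hn₁⟩ := eventually_atTop.1 <| (eventually_ge_atTop n₀).and <|
      ((hrpow (by norm_num : (0 : ℝ) < 1 / 2)).eventually_ge_atTop (2 * l)).and <|
      ((hrpow (by positivity : 0 < δ / 2)).eventually_ge_atTop (2 ^ l * l !)).and <|
      eventually_ge_atTop 1
    refine ⟨n₁, fun V _ _ H hn hH hbox => ?_⟩
    obtain ⟨hn₀, h2l, hconst, hn1⟩ := hn₁ _ hn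
    have hlink (L : Finset V) (hL : #L = l) :
        (#(H.link r L) : ℝ) ≤ Fintype.card V ^ ((r : ℝ) - δ) :=
      ih V (H.link r L) hn₀ (fun T hT => (mem_link.1 hT).1) (not_hasBox_link hl hbox hL)
    have key := le_rpow_of_sub_pow_le hl (by exact_mod_cast hn1) hδ h2l hconst fun hX =>
      card_sub_pow_le_of_card_link_le hl hH (by positivity) hlink hX
    rwa [pow_succ, mul_inv, ← div_eq_mul_inv, Nat.cast_succ]

lemma SimpleGraph.exists_completeMultipartite_of_hasBox_cliqueFinset {V : Type*} [Fintype V]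
    [DecidableEq V] (G : SimpleGraph V) [DecidableRel G.Adj] {r l : ℕ} (hl : 0 < l)
    (h : (G.cliqueFinset r).HasBox r l) :
    ∃ A : Fin r → Finset V, (∀ i, #(A i) = l) ∧ (∀ i j, i ≠ j → Disjoint (A i) (A j)) ∧
      ∀ i j, i ≠ j → ∀ u ∈ A i, ∀ v ∈ A j, G.Adj u v := by
  obtain ⟨A, hA, hAdisj, hAclique⟩ := h
  refine ⟨A, hA, fun i j hij => hAdisj hij, fun i j hij u hu v hv => ?_⟩
  choose g₀ hg₀ using fun i => card_pos.1 (hA i ▸ hl)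
  set g := update (update g₀ i u) j v
  have hg₁ := (forall_update_iff g₀ fun k x => x ∈ A k).2 ⟨hu, fun k _ => hg₀ k⟩
  have hg : ∀ k, g k ∈ A k := (forall_update_iff _ fun k x => x ∈ A k).2 ⟨hv, fun k _ => hg₁ k⟩
  have huv : u ≠ v := fun huv => Finset.disjoint_left.1 (hAdisj hij) hu (huv ▸ hv)
  refine (SimpleGraph.mem_cliqueFinset_iff.1 (hAclique g hg)).isClique ?_ ?_ huv
  · exact mem_image.2 ⟨i, mem_univ i, by simp [g, update_of_ne hij]⟩
  · exact mem_image.2 ⟨j, mem_univ j, by simp [g]⟩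

theorem clique_count_of_no_Kpartite_general (r l : ℕ) (hl : 2 ≤ l) :
    ∃ ε : ℝ, 0 < ε ∧ ∃ n₀ : ℕ,
      ∀ (V : Type) [Fintype V] (G : SimpleGraph V),
        n₀ ≤ Fintype.card V →
        (¬ ∃ A : Fin r → Finset V,
            (∀ i, (A i).card = l) ∧
            (∀ i j, i ≠ j → Disjoint (A i) (A j)) ∧
            (∀ i j, i ≠ j → ∀ u ∈ A i, ∀ v ∈ A j, G.Adj u v)) →
        (cliqueCount G r : ℝ) ≤ (Fintype.card V : ℝ) ^ ((r : ℝ) - ε) := by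
  classical
  have hl₀ : 0 < l := by omega
  obtain ⟨n₀, hbox⟩ := card_le_rpow_of_not_hasBox hl₀ r
  refine ⟨((2 * l : ℝ) ^ r)⁻¹, by positivity, n₀, fun V _ G hn hfree => ?_⟩
  rw [cliqueCount, ← SimpleGraph.cliqueSet, ← SimpleGraph.coe_cliqueFinset, Set.ncard_coe_finset]
  exact hbox V _ hn (fun S hS => (SimpleGraph.mem_cliqueFinset_iff.1 hS).card_eq)
    fun h => hfree (G.exists_completeMultipartite_of_hasBox_cliqueFinset hl₀ h)

/-- For fixed `r, l ≥ 2` there are `ε > 0` and `n₀` such that every graph on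
`n ≥ n₀` vertices with no subgraph isomorphic to the complete `r`-partite graph
`K_{l,…,l}` has at most `n ^ (r - ε)` cliques of size `r`. -/
theorem clique_count_of_no_Kpartite (r l : ℕ) (hr : 2 ≤ r) (hl : 2 ≤ l) :
    ∃ ε : ℝ, 0 < ε ∧ ∃ n₀ : ℕ,
      ∀ (V : Type) [Fintype V] (G : SimpleGraph V),
        n₀ ≤ Fintype.card V →
        (¬ ∃ A : Fin r → Finset V,
            (∀ i, (A i).card = l) ∧
            (∀ i j, i ≠ j → Disjoint (A i) (A j)) ∧
            (∀ i j, i ≠ j → ∀ u ∈ A i, ∀ v ∈ A j, G.Adj u v)) →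
        (cliqueCount G r : ℝ) ≤ (Fintype.card V : ℝ) ^ ((r : ℝ) - ε) :=
  clique_count_of_no_Kpartite_general r l hl
end

section
/- For each integer s ≥ 3, let Tr(s) denote the maximum cardinality of a family of 3-element subsets of an s-element set such that any two distinct members share at most one element (a maximum family of pairwise edge-disjoint triangles). Then Tr(s)/(s²/6) tends to 1 as s → ∞. -/
open Finset

-- set of the sSup
def triSet (s : ℕ) : Set ℕ :=
  {k : ℕ | ∃ M : Finset (Finset (Fin s)), M.card = k ∧
    (∀ A ∈ M, A.card = 3) ∧
    (∀ A ∈ M, ∀ B ∈ M, A ≠ B → (A ∩ B).card ≤ 1)}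

lemma triSet_nonempty (s : ℕ) : (triSet s).Nonempty :=
  ⟨0, ∅, by simp⟩

lemma triSet_bddAbove (s : ℕ) : BddAbove (triSet s) := by
  refine ⟨2 ^ s, fun k hk => ?_⟩
  obtain ⟨M, hM, -, -⟩ := hk
  calc k = M.card := hM.symm
    _ ≤ Fintype.card (Finset (Fin s)) := M.card_le_univ
    _ = 2 ^ s := by simp

lemma upper_bound (s : ℕ) (M : Finset (Finset (Fin s)))
    (h3 : ∀ A ∈ M, A.card = 3)
    (hd : ∀ A ∈ M, ∀ B ∈ M, A ≠ B → (A ∩ B).card ≤ 1) :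
    6 * M.card ≤ s ^ 2 := by
  have hdisj : ∀ A ∈ M, ∀ B ∈ M, A ≠ B →
      Disjoint (A.powersetCard 2) (B.powersetCard 2) := by
    intro A hA B hB hAB
    rw [Finset.disjoint_left]
    intro e heA heB
    rw [Finset.mem_powersetCard] at heA heB
    have : e ⊆ A ∩ B := Finset.subset_inter heA.1 heB.1
    have := Finset.card_le_card this
    rw [heA.2] at this
    exact absurd (this.trans (hd A hA B hB hAB)) (by norm_num)
  have hcard : (M.biUnion fun A => A.powersetCard 2).card = 3 * M.card := by
    rw [Finset.card_biUnion hdisj]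
    rw [Finset.sum_congr rfl (fun A hA => by
      rw [Finset.card_powersetCard, h3 A hA])]
    simp [Nat.choose, mul_comm]
  have hsub : (M.biUnion fun A => A.powersetCard 2) ⊆
      (Finset.univ : Finset (Fin s)).powersetCard 2 := by
    intro e he
    rw [Finset.mem_biUnion] at he
    obtain ⟨A, -, heA⟩ := he
    rw [Finset.mem_powersetCard] at heA ⊢
    exact ⟨Finset.subset_univ e, heA.2⟩
  have := Finset.card_le_card hsub
  rw [hcard, Finset.card_powersetCard, Finset.card_univ, Fintype.card_fin] at this
  have h2 : 2 * (3 * M.card) ≤ 2 * (s.choose 2) := by omega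
  rw [Nat.choose_two_right, Nat.two_mul_div_two_of_even (Nat.even_mul_pred_self s)] at h2
  calc 6 * M.card = 2 * (3 * M.card) := by ring
    _ ≤ s * (s - 1) := h2
    _ ≤ s * s := Nat.mul_le_mul_left _ (Nat.sub_le _ _)
    _ = s ^ 2 := (sq s).symm

section Lower
variable (s : ℕ) [NeZero s]

lemma eq_of_two_mem (A : Finset (Fin s)) (hcard : A.card = 3)
    (hsum : ∑ x ∈ A, x = 0) {x y : Fin s} (hx : x ∈ A) (hy : y ∈ A)
    (hxy : x ≠ y) : A = {x, y, -(x + y)} := by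
  have hss : ({x, y} : Finset (Fin s)) ⊆ A := by
    intro z hz
    rw [Finset.mem_insert, Finset.mem_singleton] at hz
    rcases hz with rfl | rfl <;> assumption
  have h1 : (A \ {x, y}).card = 1 := by
    rw [Finset.card_sdiff_of_subset hss, hcard, Finset.card_pair hxy]
  obtain ⟨z, hz⟩ := Finset.card_eq_one.mp h1
  have hzx : z ≠ x ∧ z ≠ y := by
    have : z ∈ A \ {x, y} := hz ▸ Finset.mem_singleton_self z
    rw [Finset.mem_sdiff, Finset.mem_insert, Finset.mem_singleton] at this
    exact ⟨fun h => this.2 (Or.inl h), fun h => this.2 (Or.inr h)⟩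
  have hA : A = {x, y, z} := by
    have h2 := Finset.sdiff_union_of_subset hss
    rw [hz] at h2
    rw [← h2]
    ext a
    simp [Finset.mem_union, Finset.mem_insert, Finset.mem_singleton, or_comm, or_assoc, or_left_comm]
  have hzval : z = -(x + y) := by
    rw [hA] at hsum
    rw [Finset.sum_insert (by simp [hxy, hzx.1.symm]),
        Finset.sum_insert (by simp [hzx.2.symm]), Finset.sum_singleton] at hsum
    have : (x + y) + z = 0 := by rw [← hsum]; abel
    exact eq_neg_of_add_eq_zero_right this
  rw [hA, hzval]

lemma lower_bound :
    ∃ M : Finset (Finset (Fin s)), (∀ A ∈ M, A.card = 3) ∧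
      (∀ A ∈ M, ∀ B ∈ M, A ≠ B → (A ∩ B).card ≤ 1) ∧
      s ^ 2 ≤ 6 * M.card + 3 * s := by
  classical
  set tri : Fin s × Fin s → Finset (Fin s) :=
    fun p => {p.1, p.2, -(p.1 + p.2)} with htri
  set T : Finset (Fin s × Fin s) :=
    Finset.univ.filter (fun p => p.1 ≠ p.2 ∧ p.1 ≠ -(p.1 + p.2) ∧ p.2 ≠ -(p.1 + p.2)) with hT
  set M : Finset (Finset (Fin s)) := T.image tri with hM
  have hmemT : ∀ p ∈ T, p.1 ≠ p.2 ∧ p.1 ≠ -(p.1 + p.2) ∧ p.2 ≠ -(p.1 + p.2) := by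
    intro p hp
    rw [hT, Finset.mem_filter] at hp
    exact hp.2
  -- every member has card 3
  have h3 : ∀ A ∈ M, A.card = 3 := by
    intro A hA
    rw [hM, Finset.mem_image] at hA
    obtain ⟨p, hp, rfl⟩ := hA
    obtain ⟨h1, h2, h3⟩ := hmemT p hp
    rw [htri]
    rw [Finset.card_insert_of_notMem (by
          simp only [Finset.mem_insert, Finset.mem_singleton]
          exact not_or.mpr ⟨h1, h2⟩),
        Finset.card_insert_of_notMem (by
          simp only [Finset.mem_singleton]; exact h3), Finset.card_singleton]
  -- every member sums to zero
  have hsum : ∀ A ∈ M, ∑ x ∈ A, x = 0 := by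
    intro A hA
    rw [hM, Finset.mem_image] at hA
    obtain ⟨p, hp, rfl⟩ := hA
    obtain ⟨h1, h2, h3⟩ := hmemT p hp
    rw [htri]
    rw [Finset.sum_insert (by
          simp only [Finset.mem_insert, Finset.mem_singleton]
          exact not_or.mpr ⟨h1, h2⟩),
        Finset.sum_insert (by
          simp only [Finset.mem_singleton]; exact h3), Finset.sum_singleton]
    abel
  -- pairwise intersections small
  have hint : ∀ A ∈ M, ∀ B ∈ M, A ≠ B → (A ∩ B).card ≤ 1 := by
    intro A hA B hB hAB
    by_contra h
    push_neg at h
    obtain ⟨x, hx, y, hy, hxy⟩ := Finset.one_lt_card.mp h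
    rw [Finset.mem_inter] at hx hy
    exact hAB ((eq_of_two_mem s A (h3 A hA) (hsum A hA) hx.1 hy.1 hxy).trans
      (eq_of_two_mem s B (h3 B hB) (hsum B hB) hx.2 hy.2 hxy).symm)
  refine ⟨M, h3, hint, ?_⟩
  -- fiber bound : T.card ≤ 6 * M.card
  have hfib : T.card ≤ 6 * M.card := by
    rw [Finset.card_eq_sum_card_fiberwise
      (f := tri) (t := M) (fun p hp => Finset.mem_image_of_mem tri hp)]
    have hle : ∀ A ∈ M, (T.filter fun p => tri p = A).card ≤ 6 := by
      intro A hA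
      have hsub : (T.filter fun p => tri p = A) ⊆ A.offDiag := by
        intro p hp
        rw [Finset.mem_filter] at hp
        obtain ⟨h1, -, -⟩ := hmemT p hp.1
        rw [Finset.mem_offDiag]
        refine ⟨?_, ?_, h1⟩
        · rw [← hp.2, htri]; simp
        · rw [← hp.2, htri]; simp
      calc (T.filter fun p => tri p = A).card ≤ A.offDiag.card :=
            Finset.card_le_card hsub
        _ = 6 := by rw [Finset.offDiag_card, h3 A hA]
    calc ∑ A ∈ M, (T.filter fun p => tri p = A).card ≤ ∑ A ∈ M, 6 :=
          Finset.sum_le_sum hle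
      _ = 6 * M.card := by rw [Finset.sum_const, smul_eq_mul, mul_comm]
  -- size of T : complement is small
  have hbad : (Finset.univ.filter (fun p : Fin s × Fin s =>
      ¬(p.1 ≠ p.2 ∧ p.1 ≠ -(p.1 + p.2) ∧ p.2 ≠ -(p.1 + p.2)))).card ≤ 3 * s := by
    set D1 : Finset (Fin s × Fin s) := Finset.univ.image (fun a : Fin s => (a, a))
    set D2 : Finset (Fin s × Fin s) := Finset.univ.image (fun a : Fin s => (a, -a - a))
    set D3 : Finset (Fin s × Fin s) := Finset.univ.image (fun b : Fin s => (-b - b, b))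
    have hsub : (Finset.univ.filter (fun p : Fin s × Fin s =>
        ¬(p.1 ≠ p.2 ∧ p.1 ≠ -(p.1 + p.2) ∧ p.2 ≠ -(p.1 + p.2)))) ⊆ D1 ∪ D2 ∪ D3 := by
      rintro ⟨a, b⟩ hp
      rw [Finset.mem_filter] at hp
      push_neg at hp
      rw [Finset.mem_union, Finset.mem_union]
      by_cases hc1 : a = b
      · exact Or.inl (Or.inl (Finset.mem_image.mpr ⟨a, Finset.mem_univ _, by
          rw [hc1]⟩))
      by_cases hc2 : a = -(a + b)
      · refine Or.inl (Or.inr (Finset.mem_image.mpr ⟨a, Finset.mem_univ _, ?_⟩))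
        have h0 : a + (a + b) = -(a + b) + (a + b) :=
          congrArg (fun x => x + (a + b)) hc2
        rw [neg_add_cancel] at h0
        have h1 : a + a + b = 0 := by rw [← h0]; abel
        have hb : b = -(a + a) := eq_neg_of_add_eq_zero_right h1
        simp only [Prod.mk.injEq]
        exact ⟨trivial, by rw [hb]; abel⟩
      · have hc3 := hp.2 hc1 hc2
        refine Or.inr (Finset.mem_image.mpr ⟨b, Finset.mem_univ _, ?_⟩)
        have h0 : b + (a + b) = -(a + b) + (a + b) :=
          congrArg (fun x => x + (a + b)) hc3
        rw [neg_add_cancel] at h0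
        have h1 : b + b + a = 0 := by rw [← h0]; abel
        have ha : a = -(b + b) := eq_neg_of_add_eq_zero_right h1
        simp only [Prod.mk.injEq]
        exact ⟨by rw [ha]; abel, trivial⟩
    calc (Finset.univ.filter (fun p : Fin s × Fin s =>
        ¬(p.1 ≠ p.2 ∧ p.1 ≠ -(p.1 + p.2) ∧ p.2 ≠ -(p.1 + p.2)))).card
        ≤ (D1 ∪ D2 ∪ D3).card := Finset.card_le_card hsub
      _ ≤ D1.card + D2.card + D3.card := by
          refine (Finset.card_union_le _ _).trans ?_
          exact Nat.add_le_add_right (Finset.card_union_le _ _) _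
      _ ≤ s + s + s := by
          gcongr <;>
            exact (Finset.card_image_le).trans (by simp)
      _ = 3 * s := by ring
  have htot : T.card + (Finset.univ.filter (fun p : Fin s × Fin s =>
      ¬(p.1 ≠ p.2 ∧ p.1 ≠ -(p.1 + p.2) ∧ p.2 ≠ -(p.1 + p.2)))).card = s ^ 2 := by
    rw [hT, Finset.card_filter_add_card_filter_not]
    simp [sq]
  omega

end Lower

/-- `triPacking s` is the maximum cardinality of a family of 3-element subsets of
an `s`-element set, any two distinct members of which share at most one element
(a maximum family of pairwise edge-disjoint triangles). -/
noncomputable def triPacking (s : ℕ) : ℕ :=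
  sSup {k : ℕ | ∃ M : Finset (Finset (Fin s)), M.card = k ∧
    (∀ A ∈ M, A.card = 3) ∧
    (∀ A ∈ M, ∀ B ∈ M, A ≠ B → (A ∩ B).card ≤ 1)}

lemma triPacking_eq (s : ℕ) : triPacking s = sSup (triSet s) := rfl

lemma triPacking_upper (s : ℕ) : 6 * triPacking s ≤ s ^ 2 := by
  have hmem := Nat.sSup_mem (triSet_nonempty s) (triSet_bddAbove s)
  rw [← triPacking_eq] at hmem
  obtain ⟨M, hM, h3, hd⟩ := hmem
  rw [← hM]
  exact upper_bound s M h3 hd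

lemma triPacking_lower (s : ℕ) [NeZero s] : s ^ 2 ≤ 6 * triPacking s + 3 * s := by
  obtain ⟨M, h3, hint, hb⟩ := lower_bound s
  have hmem : M.card ∈ triSet s := ⟨M, rfl, h3, hint⟩
  have := le_csSup (triSet_bddAbove s) hmem
  rw [← triPacking_eq] at this
  omega

/-- `Tr(s) / (s²/6) → 1` as `s → ∞`. -/
theorem triangle_packing_asymptotics :
    Filter.Tendsto (fun s : ℕ => (triPacking s : ℝ) / ((s : ℝ) ^ 2 / 6))
      Filter.atTop (nhds 1) := by
  have hlow : Filter.Tendsto (fun s : ℕ => 1 - 3 / (s : ℝ)) Filter.atTop (nhds 1) := by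
    have := tendsto_const_nhds (x := (1:ℝ)) (f := Filter.atTop (α := ℕ))
    have h0 : Filter.Tendsto (fun s : ℕ => (3:ℝ) / (s : ℝ)) Filter.atTop (nhds 0) :=
      tendsto_const_div_atTop_nhds_zero_nat 3
    simpa using this.sub h0
  refine tendsto_of_tendsto_of_tendsto_of_le_of_le' hlow tendsto_const_nhds ?_ ?_
  · filter_upwards [Filter.eventually_ge_atTop 1] with s hs
    haveI : NeZero s := ⟨by omega⟩
    have hs0 : (0:ℝ) < (s:ℝ) := by exact_mod_cast hs
    have key : (s:ℝ)^2 ≤ 6 * (triPacking s : ℝ) + 3 * s := by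
      exact_mod_cast triPacking_lower s
    rw [le_div_iff₀ (by positivity)]
    have heq : (1 - 3/(s:ℝ)) * ((s:ℝ)^2/6) = ((s:ℝ)^2 - 3*s)/6 := by
      field_simp
    rw [heq]
    linarith
  · filter_upwards [Filter.eventually_ge_atTop 1] with s hs
    have hs0 : (0:ℝ) < (s:ℝ) := by exact_mod_cast hs
    have key : 6 * (triPacking s : ℝ) ≤ (s:ℝ)^2 := by
      exact_mod_cast triPacking_upper s
    rw [div_le_one (by positivity)]
    linarith
end

section
/- Fix an integer k ≥ 2. For each integer s ≥ k, let g_k(s) denote the maximum cardinality of a family of k-element subsets of an s-element set such that any two distinct members share at most one element (a maximum family of pairwise edge-disjoint k-cliques). Then g_k(s)/(s²/(k(k−1))) tends to 1 as s → ∞. -/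
open Finset

/-- A packing family predicate over an arbitrary type. -/
def GoodFam (k : ℕ) {α : Type} [DecidableEq α] (M : Finset (Finset α)) : Prop :=
  (∀ A ∈ M, A.card = k) ∧ ∀ A ∈ M, ∀ B ∈ M, A ≠ B → (A ∩ B).card ≤ 1

def Packs (k s c : ℕ) : Prop :=
  ∃ M : Finset (Finset (Fin s)), M.card = c ∧ GoodFam k M

/-- `cliquePacking k s` is the maximum cardinality of a family of `k`-element
subsets of an `s`-element set, any two distinct members of which share at most
one element (a maximum family of pairwise edge-disjoint `k`-cliques). -/
noncomputable def cliquePacking (k s : ℕ) : ℕ :=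
  sSup {c : ℕ | ∃ M : Finset (Finset (Fin s)), M.card = c ∧
    (∀ A ∈ M, A.card = k) ∧
    (∀ A ∈ M, ∀ B ∈ M, A ≠ B → (A ∩ B).card ≤ 1)}

lemma cliquePacking_eq (k s : ℕ) : cliquePacking k s = sSup {c | Packs k s c} := rfl

lemma packs_zero (k s : ℕ) : Packs k s 0 := ⟨∅, by simp [GoodFam]⟩

lemma packs_bddAbove (k s : ℕ) : BddAbove {c | Packs k s c} := by
  refine ⟨2 ^ s, fun c hc => ?_⟩
  obtain ⟨M, hM, -⟩ := hc
  calc c = M.card := hM.symm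
    _ ≤ Fintype.card (Finset (Fin s)) := Finset.card_le_univ M
    _ = 2 ^ s := by simp

lemma packs_cliquePacking (k s : ℕ) : Packs k s (cliquePacking k s) := by
  have h1 : {c : ℕ | Packs k s c}.Nonempty := ⟨0, packs_zero k s⟩
  exact Nat.sSup_mem h1 (packs_bddAbove k s)

lemma le_cliquePacking {k s c : ℕ} (h : Packs k s c) : c ≤ cliquePacking k s :=
  le_csSup (packs_bddAbove k s) h

/-- Transfer a good family along an embedding. -/
lemma goodFam_map {α β : Type} [DecidableEq α] [DecidableEq β] {k : ℕ}
    {M : Finset (Finset α)} (f : α ↪ β) (h : GoodFam k M) :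
    GoodFam k (M.map ⟨Finset.map f, Finset.map_injective f⟩) ∧
      (M.map ⟨Finset.map f, Finset.map_injective f⟩).card = M.card := by
  refine ⟨⟨?_, ?_⟩, Finset.card_map _⟩
  · intro A hA
    simp only [Finset.mem_map] at hA
    obtain ⟨A₀, hA₀, rfl⟩ := hA
    simpa using h.1 A₀ hA₀
  · intro A hA B hB hAB
    simp only [Finset.mem_map] at hA hB
    obtain ⟨A₀, hA₀, rfl⟩ := hA
    obtain ⟨B₀, hB₀, rfl⟩ := hB
    have hne : A₀ ≠ B₀ := fun h' => hAB (by rw [h'])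
    have := h.2 A₀ hA₀ B₀ hB₀ hne
    simp only [Function.Embedding.coeFn_mk, ← Finset.map_inter, Finset.card_map]
    exact this

lemma packs_of_emb {α : Type} [DecidableEq α] {k s c : ℕ} (f : α ↪ Fin s)
    {M : Finset (Finset α)} (hc : M.card = c) (h : GoodFam k M) : Packs k s c := by
  obtain ⟨hg, hcard⟩ := goodFam_map f h
  exact ⟨_, by rw [hcard, hc], hg⟩

lemma packs_mono {k s t c : ℕ} (hst : s ≤ t) (h : Packs k s c) : Packs k t c := by
  obtain ⟨M, hM, hg⟩ := h
  exact packs_of_emb (Fin.castLEEmb hst) hM hg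

lemma cliquePacking_mono {k : ℕ} {s t : ℕ} (hst : s ≤ t) :
    cliquePacking k s ≤ cliquePacking k t :=
  le_cliquePacking (packs_mono hst (packs_cliquePacking k s))

lemma packs_base {k : ℕ} : Packs k k 1 :=
  ⟨{Finset.univ}, by simp [GoodFam]⟩

lemma two_mul_choose_two (n : ℕ) : 2 * n.choose 2 = n * (n - 1) := by
  induction n with
  | zero => simp
  | succ m ih =>
    rw [Nat.choose_succ_succ, Nat.mul_add, ih, Nat.choose_one_right]
    cases m with
    | zero => simp
    | succ l => simp only [Nat.succ_sub_one]; ring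

/-- The counting upper bound. -/
lemma packs_upper {k s c : ℕ} (hk : 2 ≤ k) (h : Packs k s c) :
    c * k.choose 2 ≤ s.choose 2 := by
  obtain ⟨M, hM, hcard, hint⟩ := h
  have hdisj : ∀ A ∈ M, ∀ B ∈ M, A ≠ B →
      Disjoint (A.powersetCard 2) (B.powersetCard 2) := by
    intro A hA B hB hAB
    rw [Finset.disjoint_left]
    intro P hPA hPB
    rw [Finset.mem_powersetCard] at hPA hPB
    have hsub : P ⊆ A ∩ B := Finset.subset_inter hPA.1 hPB.1
    have := Finset.card_le_card hsub
    have := hint A hA B hB hAB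
    omega
  have hun : M.biUnion (fun A => A.powersetCard 2) ⊆ Finset.univ.powersetCard 2 := by
    intro P hP
    rw [Finset.mem_biUnion] at hP
    obtain ⟨A, hA, hPA⟩ := hP
    rw [Finset.mem_powersetCard] at hPA ⊢
    exact ⟨Finset.subset_univ P, hPA.2⟩
  have h1 : (M.biUnion (fun A => A.powersetCard 2)).card = c * k.choose 2 := by
    rw [Finset.card_biUnion hdisj]
    rw [Finset.sum_congr rfl (fun A hA => by rw [Finset.card_powersetCard, hcard A hA])]
    simp [hM, mul_comm]
  calc c * k.choose 2 = _ := h1.symm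
    _ ≤ (Finset.univ.powersetCard 2 : Finset (Finset (Fin s))).card :=
        Finset.card_le_card hun
    _ = s.choose 2 := by rw [Finset.card_powersetCard]; simp

section Construction

variable {K n : ℕ}

/-- the "line" embedding. -/
def lineEmb (K n : ℕ) (x y : ZMod n) : Fin K ↪ Fin K × ZMod n :=
  ⟨fun i => (i, x + (i.val : ZMod n) * y), fun i j h => by
    simpa using congrArg Prod.fst h⟩

/-- the "group" embedding. -/
def grpEmb (K n : ℕ) (i : Fin K) : ZMod n ↪ Fin K × ZMod n :=
  ⟨fun z => (i, z), fun a b h => by simpa using congrArg Prod.snd h⟩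

lemma mem_line {x y : ZMod n} {A : Finset (Fin K)} {p : Fin K × ZMod n} :
    p ∈ A.map (lineEmb K n x y) ↔ p.1 ∈ A ∧ p.2 = x + (p.1.val : ZMod n) * y := by
  constructor
  · rintro hp
    rw [Finset.mem_map] at hp
    obtain ⟨i, hi, rfl⟩ := hp
    exact ⟨hi, rfl⟩
  · rintro ⟨h1, h2⟩
    rw [Finset.mem_map]
    exact ⟨p.1, h1, by rw [lineEmb]; exact Prod.ext rfl h2.symm⟩

lemma mem_grp {i : Fin K} {B : Finset (ZMod n)} {p : Fin K × ZMod n} :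
    p ∈ B.map (grpEmb K n i) ↔ p.1 = i ∧ p.2 ∈ B := by
  constructor
  · rintro hp
    rw [Finset.mem_map] at hp
    obtain ⟨z, hz, rfl⟩ := hp
    exact ⟨rfl, hz⟩
  · rintro ⟨h1, h2⟩
    rw [Finset.mem_map]
    exact ⟨p.2, h2, by rw [grpEmb]; exact Prod.ext h1.symm rfl⟩

lemma cancel_z_aux [NeZero n] (hcop : ∀ d, 0 < d → d < K → Nat.Coprime d n)
    {i j : Fin K} (hlt : j.val < i.val) {z : ZMod n}
    (h : (i.val : ZMod n) * z = (j.val : ZMod n) * z) : z = 0 := by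
  set d : ℕ := i.val - j.val with hd
  have hd0 : 0 < d := by omega
  have hdK : d < K := by have := i.isLt; omega
  have hiv : (i.val : ZMod n) = (j.val : ZMod n) + (d : ZMod n) := by
    rw [← Nat.cast_add]
    congr 1
    omega
  rw [hiv, add_mul] at h
  have hdz : (d : ZMod n) * z = 0 :=
    add_left_cancel (h.trans (add_zero ((j.val : ZMod n) * z)).symm)
  have hu : IsUnit (d : ZMod n) := (ZMod.isUnit_iff_coprime d n).2 (hcop d hd0 hdK)
  have := hu.mul_left_cancel (by rw [hdz, mul_zero] : (d : ZMod n) * z = (d : ZMod n) * 0)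
  simpa using this

lemma cancel_z [NeZero n] (hcop : ∀ d, 0 < d → d < K → Nat.Coprime d n)
    {i j : Fin K} (hij : i ≠ j) {z : ZMod n}
    (h : (i.val : ZMod n) * z = (j.val : ZMod n) * z) : z = 0 := by
  rcases Nat.lt_or_ge j.val i.val with hlt | hge
  · exact cancel_z_aux hcop hlt h
  · have hlt : i.val < j.val :=
      lt_of_le_of_ne hge (fun hh => hij (Fin.ext hh))
    exact cancel_z_aux hcop hlt h.symm

end Construction

lemma packs_product {k K n cK cn : ℕ} (hk : 2 ≤ k) (hn : 0 < n)
    (hcop : ∀ d, 0 < d → d < K → Nat.Coprime d n)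
    (hK : Packs k K cK) (hN : Packs k n cn) :
    Packs k (K * n) (n * n * cK + K * cn) := by
  haveI : NeZero n := ⟨hn.ne'⟩
  obtain ⟨M₀, hM₀c, hM₀⟩ := hK
  obtain ⟨M₁0, hM₁0c, hM₁0⟩ := hN
  -- transfer the small packing to `ZMod n`
  have hinj : Function.Injective (fun j : Fin n => ((j.val : ℕ) : ZMod n)) := by
    intro a b h
    apply Fin.ext
    have h2 := congrArg ZMod.val h
    simpa [ZMod.val_cast_of_lt a.isLt, ZMod.val_cast_of_lt b.isLt] using h2
  obtain ⟨hM₁, hM₁card⟩ :=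
    goodFam_map (⟨fun j : Fin n => ((j.val : ℕ) : ZMod n), hinj⟩ : Fin n ↪ ZMod n) hM₁0
  set M₁ : Finset (Finset (ZMod n)) :=
    M₁0.map ⟨Finset.map ⟨fun j : Fin n => ((j.val : ℕ) : ZMod n), hinj⟩,
      Finset.map_injective _⟩ with hM₁def
  have hM₁c : M₁.card = cn := by rw [hM₁card, hM₁0c]
  -- the two families
  set F : Finset (Finset (Fin K × ZMod n)) :=
    ((univ : Finset (ZMod n)) ×ˢ (univ : Finset (ZMod n)) ×ˢ M₀).image
      (fun t => t.2.2.map (lineEmb K n t.1 t.2.1)) with hF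
  set G : Finset (Finset (Fin K × ZMod n)) :=
    ((univ : Finset (Fin K)) ×ˢ M₁).image (fun t => t.2.map (grpEmb K n t.1)) with hG
  -- intersection bounds
  have hFinter : ∀ (x y x' y' : ZMod n) (A A' : Finset (Fin K)), A ∈ M₀ → A' ∈ M₀ →
      (x ≠ x' ∨ y ≠ y' ∨ A ≠ A') →
      (A.map (lineEmb K n x y) ∩ A'.map (lineEmb K n x' y')).card ≤ 1 := by
    intro x y x' y' A A' hA hA' hne
    by_contra hc
    have hlt := Nat.lt_of_not_le hc
    obtain ⟨p, hp, q, hq, hpq⟩ := Finset.one_lt_card.mp hlt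
    rw [Finset.mem_inter] at hp hq
    obtain ⟨hp1, hp2⟩ := hp
    obtain ⟨hq1, hq2⟩ := hq
    rw [mem_line] at hp1 hp2 hq1 hq2
    have h1 : p.1 ≠ q.1 := by
      intro h
      exact hpq (Prod.ext h (by rw [hp1.2, hq1.2, h]))
    have e1 : x + (p.1.val : ZMod n) * y = x' + (p.1.val : ZMod n) * y' := by
      rw [← hp1.2, hp2.2]
    have e2 : x + (q.1.val : ZMod n) * y = x' + (q.1.val : ZMod n) * y' := by
      rw [← hq1.2, hq2.2]
    have e3 : (p.1.val : ZMod n) * (y - y') = (q.1.val : ZMod n) * (y - y') := by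
      linear_combination e1 - e2
    have hy : y = y' := by
      have := cancel_z hcop h1 e3
      rwa [sub_eq_zero] at this
    have hx : x = x' := by
      rw [hy] at e1
      exact add_right_cancel e1
    have hAA : A ≠ A' := by
      rcases hne with h | h | h
      · exact absurd hx h
      · exact absurd hy h
      · exact h
    have hfin : 1 < (A ∩ A').card := by
      have h2 := hlt
      rw [hx, hy, ← Finset.map_inter, Finset.card_map] at h2
      exact h2
    exact absurd (hM₀.2 A hA A' hA' hAA) (by omega)
  have hGinter : ∀ (i i' : Fin K) (B B' : Finset (ZMod n)), B ∈ M₁ → B' ∈ M₁ →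
      (i ≠ i' ∨ B ≠ B') →
      (B.map (grpEmb K n i) ∩ B'.map (grpEmb K n i')).card ≤ 1 := by
    intro i i' B B' hB hB' hne
    rcases eq_or_ne i i' with rfl | hii
    · have hBB : B ≠ B' := by
        rcases hne with h | h
        · exact absurd rfl h
        · exact h
      rw [← Finset.map_inter, Finset.card_map]
      exact hM₁.2 B hB B' hB' hBB
    · have : B.map (grpEmb K n i) ∩ B'.map (grpEmb K n i') = ∅ := by
        rw [Finset.eq_empty_iff_forall_notMem]
        intro p hp
        rw [Finset.mem_inter, mem_grp, mem_grp] at hp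
        exact hii (hp.1.1 ▸ hp.2.1 ▸ rfl)
      rw [this]
      simp
  have hFGinter : ∀ (x y : ZMod n) (A : Finset (Fin K)) (i : Fin K) (B : Finset (ZMod n)),
      (A.map (lineEmb K n x y) ∩ B.map (grpEmb K n i)).card ≤ 1 := by
    intro x y A i B
    by_contra hc
    obtain ⟨p, hp, q, hq, hpq⟩ := Finset.one_lt_card.mp (Nat.lt_of_not_le hc)
    rw [Finset.mem_inter, mem_line, mem_grp] at hp hq
    have h1 : p.1 = q.1 := by rw [hp.2.1, hq.2.1]
    exact hpq (Prod.ext h1 (by rw [hp.1.2, hq.1.2, h1]))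
  -- first-coordinate images
  have hfstF : ∀ (x y : ZMod n) (A : Finset (Fin K)),
      (A.map (lineEmb K n x y)).image Prod.fst = A := by
    intro x y A
    ext i
    simp only [Finset.mem_image]
    constructor
    · rintro ⟨p, hp, rfl⟩
      exact (mem_line.mp hp).1
    · intro hi
      exact ⟨(i, x + (i.val : ZMod n) * y), mem_line.mpr ⟨hi, rfl⟩, rfl⟩
  have hfstG : ∀ (i : Fin K) (B : Finset (ZMod n)), B.Nonempty →
      (B.map (grpEmb K n i)).image Prod.fst = {i} := by
    intro i B hB
    ext j
    simp only [Finset.mem_image, Finset.mem_singleton]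
    constructor
    · rintro ⟨p, hp, rfl⟩
      exact (mem_grp.mp hp).1
    · rintro rfl
      obtain ⟨z, hz⟩ := hB
      exact ⟨(j, z), mem_grp.mpr ⟨rfl, hz⟩, rfl⟩
  -- F blocks and G blocks are distinct
  have hFG : Disjoint F G := by
    rw [Finset.disjoint_left]
    intro b hb hbG
    rw [hF, Finset.mem_image] at hb
    rw [hG, Finset.mem_image] at hbG
    obtain ⟨t, ht, hbt⟩ := hb
    obtain ⟨u, hu, hbu⟩ := hbG
    simp only [Finset.mem_product, Finset.mem_univ, true_and] at ht hu
    have hBne : u.2.Nonempty := by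
      rw [← Finset.card_pos, hM₁.1 u.2 hu]
      omega
    have h1 : b.image Prod.fst = t.2.2 := by rw [← hbt]; exact hfstF _ _ _
    have h2 : b.image Prod.fst = {u.1} := by rw [← hbu]; exact hfstG _ _ hBne
    have h3 : t.2.2.card = k := hM₀.1 t.2.2 ht
    rw [h1] at h2
    rw [h2] at h3
    simp at h3
    omega
  -- cardinalities
  have hinjF : Set.InjOn (fun t : ZMod n × ZMod n × Finset (Fin K) =>
      t.2.2.map (lineEmb K n t.1 t.2.1))
      ↑((univ : Finset (ZMod n)) ×ˢ (univ : Finset (ZMod n)) ×ˢ M₀) := by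
    intro t ht t' ht' heq
    rw [Finset.mem_coe] at ht ht'
    simp only [Finset.mem_product, Finset.mem_univ, true_and] at ht ht'
    dsimp only at heq
    by_contra hne
    have hor : t.1 ≠ t'.1 ∨ t.2.1 ≠ t'.2.1 ∨ t.2.2 ≠ t'.2.2 := by
      by_contra hno
      push_neg at hno
      exact hne (Prod.ext hno.1 (Prod.ext hno.2.1 hno.2.2))
    have := hFinter t.1 t.2.1 t'.1 t'.2.1 t.2.2 t'.2.2 ht ht' hor
    rw [heq, Finset.inter_self, Finset.card_map, hM₀.1 t'.2.2 ht'] at this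
    omega
  have hinjG : Set.InjOn (fun u : Fin K × Finset (ZMod n) => u.2.map (grpEmb K n u.1))
      ↑((univ : Finset (Fin K)) ×ˢ M₁) := by
    intro u hu u' hu' heq
    rw [Finset.mem_coe] at hu hu'
    simp only [Finset.mem_product, Finset.mem_univ, true_and] at hu hu'
    dsimp only at heq
    by_contra hne
    have hor : u.1 ≠ u'.1 ∨ u.2 ≠ u'.2 := by
      by_contra hno
      push_neg at hno
      exact hne (Prod.ext hno.1 hno.2)
    have := hGinter u.1 u'.1 u.2 u'.2 hu hu' hor
    rw [heq, Finset.inter_self, Finset.card_map, hM₁.1 u'.2 hu'] at this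
    omega
  have hcF : F.card = n * n * cK := by
    rw [hF, Finset.card_image_of_injOn hinjF]
    simp only [Finset.card_product, Finset.card_univ, ZMod.card, hM₀c]
    ring
  have hcG : G.card = K * cn := by
    rw [hG, Finset.card_image_of_injOn hinjG]
    simp only [Finset.card_product, Finset.card_univ, Fintype.card_fin, hM₁c]
  -- the combined family is good
  have hgood : GoodFam k (F ∪ G) := by
    constructor
    · intro b hb
      rw [Finset.mem_union] at hb
      rcases hb with hb | hb
      · rw [hF, Finset.mem_image] at hb
        obtain ⟨t, ht, rfl⟩ := hb
        simp only [Finset.mem_product, Finset.mem_univ, true_and] at ht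
        rw [Finset.card_map]
        exact hM₀.1 t.2.2 ht
      · rw [hG, Finset.mem_image] at hb
        obtain ⟨u, hu, rfl⟩ := hb
        simp only [Finset.mem_product, Finset.mem_univ, true_and] at hu
        rw [Finset.card_map]
        exact hM₁.1 u.2 hu
    · intro b hb b' hb' hne
      rw [Finset.mem_union] at hb hb'
      rcases hb with hb | hb <;> rcases hb' with hb' | hb'
      · rw [hF, Finset.mem_image] at hb hb'
        obtain ⟨t, ht, rfl⟩ := hb
        obtain ⟨t', ht', rfl⟩ := hb'
        simp only [Finset.mem_product, Finset.mem_univ, true_and] at ht ht'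
        apply hFinter _ _ _ _ _ _ ht ht'
        by_contra hno
        push_neg at hno
        exact hne (by rw [hno.1, hno.2.1, hno.2.2])
      · rw [hF, Finset.mem_image] at hb
        rw [hG, Finset.mem_image] at hb'
        obtain ⟨t, ht, rfl⟩ := hb
        obtain ⟨u, hu, rfl⟩ := hb'
        exact hFGinter _ _ _ _ _
      · rw [hG, Finset.mem_image] at hb
        rw [hF, Finset.mem_image] at hb'
        obtain ⟨u, hu, rfl⟩ := hb
        obtain ⟨t, ht, rfl⟩ := hb'
        rw [Finset.inter_comm]
        exact hFGinter _ _ _ _ _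
      · rw [hG, Finset.mem_image] at hb hb'
        obtain ⟨u, hu, rfl⟩ := hb
        obtain ⟨u', hu', rfl⟩ := hb'
        simp only [Finset.mem_product, Finset.mem_univ, true_and] at hu hu'
        apply hGinter _ _ _ _ hu hu'
        by_contra hno
        push_neg at hno
        exact hne (by rw [hno.1, hno.2])
  have hcard : (F ∪ G).card = n * n * cK + K * cn := by
    rw [Finset.card_union_of_disjoint hFG, hcF, hcG]
  have hcardT : Fintype.card (Fin K × ZMod n) = K * n := by
    rw [Fintype.card_prod, Fintype.card_fin, ZMod.card]
  exact packs_of_emb (Fintype.equivFinOfCardEq hcardT).toEmbedding hcard hgood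

/-! ### Numeric corollaries -/

lemma cliquePacking_upper {k : ℕ} (hk : 2 ≤ k) (s : ℕ) :
    cliquePacking k s * (k * (k - 1)) ≤ s * (s - 1) := by
  have h := packs_upper hk (packs_cliquePacking k s)
  calc cliquePacking k s * (k * (k - 1))
      = cliquePacking k s * (2 * k.choose 2) := by rw [two_mul_choose_two]
    _ = 2 * (cliquePacking k s * k.choose 2) := by ring
    _ ≤ 2 * s.choose 2 := by
        have := Nat.mul_le_mul_left 2 h
        exact this
    _ = s * (s - 1) := two_mul_choose_two s

lemma engine_nat {k n : ℕ} (hk : 2 ≤ k) (hn : 0 < n)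
    (hcop : ∀ d, 0 < d → d < k → Nat.Coprime d n) :
    n * n + k * cliquePacking k n ≤ cliquePacking k (k * n) := by
  have h := packs_product hk hn hcop (packs_base (k := k)) (packs_cliquePacking k n)
  have h2 := le_cliquePacking h
  simpa using h2

lemma dense_nat {k K n : ℕ} (hk : 2 ≤ k) (hn : 0 < n)
    (hcop : ∀ d, 0 < d → d < K → Nat.Coprime d n) :
    n * n * cliquePacking k K ≤ cliquePacking k (K * n) := by
  have h := packs_product hk hn hcop (packs_cliquePacking k K) (packs_zero k n)
  have h2 := le_cliquePacking h
  simpa using h2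

lemma coprime_of_fac_dvd {K n : ℕ} (hn : 0 < n) (h : (K - 1).factorial ∣ n - 1) :
    ∀ d, 0 < d → d < K → Nat.Coprime d n := by
  intro d hd0 hdK
  have h1 : d ∣ (K - 1).factorial := Nat.dvd_factorial hd0 (by omega)
  have h2 : d ∣ n - 1 := h1.trans h
  have g1 : Nat.gcd d n ∣ n := Nat.gcd_dvd_right _ _
  have g2 : Nat.gcd d n ∣ n - 1 := (Nat.gcd_dvd_left _ _).trans h2
  have g3 : Nat.gcd d n ∣ n - (n - 1) := Nat.dvd_sub g1 g2
  have hsub : n - (n - 1) = 1 := by omega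
  rw [hsub] at g3
  exact Nat.dvd_one.mp g3

/-! ### The recursive sequence -/

def aseq (k : ℕ) : ℕ → ℕ
  | 0 => 1
  | j + 1 => k * aseq k j + ((k - 1).factorial * k - (k - 1))

lemma aseq_pos {k : ℕ} (hk : 2 ≤ k) : ∀ j, 0 < aseq k j := by
  intro j
  induction j with
  | zero => simp [aseq]
  | succ m ih =>
    have : 0 < k * aseq k m := Nat.mul_pos (by omega) ih
    simp only [aseq]
    omega

lemma aseq_ge_pow {k : ℕ} (hk : 2 ≤ k) : ∀ j, 2 ^ j ≤ aseq k j := by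
  intro j
  induction j with
  | zero => simp [aseq]
  | succ m ih =>
    have h1 : 2 ^ (m + 1) = 2 * 2 ^ m := by ring
    have h2 : 2 * 2 ^ m ≤ 2 * aseq k m := Nat.mul_le_mul_left 2 ih
    have h3 : 2 * aseq k m ≤ k * aseq k m := Nat.mul_le_mul_right _ hk
    simp only [aseq]
    omega

lemma aseq_dvd {k : ℕ} (hk : 2 ≤ k) : ∀ j, (k - 1).factorial ∣ aseq k j - 1 := by
  intro j
  induction j with
  | zero => simp [aseq]
  | succ m ih =>
    set L := (k - 1).factorial with hL
    have hL1 : 1 ≤ L := Nat.factorial_pos _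
    have hpos := aseq_pos hk m
    have hk1 : k - 1 ≤ L * k := by
      calc k - 1 ≤ k := Nat.sub_le _ _
        _ = 1 * k := (one_mul k).symm
        _ ≤ L * k := Nat.mul_le_mul_right k hL1
    have hmul : k * aseq k m = k * (aseq k m - 1) + k := by
      have : aseq k m - 1 + 1 = aseq k m := by omega
      calc k * aseq k m = k * (aseq k m - 1 + 1) := by rw [this]
        _ = k * (aseq k m - 1) + k := by ring
    have key : aseq k (m + 1) - 1 = k * (aseq k m - 1) + L * k := by
      simp only [aseq, ← hL]
      omega
    rw [key]
    exact Nat.dvd_add (Dvd.dvd.mul_left ih k) (Dvd.intro k rfl)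

/-! ### Real-valued estimates -/

/-- `s` supports a packing of density at least `1 - ε`. -/
def GoodCP (k s : ℕ) (ε : ℝ) : Prop :=
  (1 - ε) * (s : ℝ) ^ 2 ≤ (cliquePacking k s : ℝ) * ((k : ℝ) * ((k : ℝ) - 1))

lemma kappa_cast {k : ℕ} (hk : 2 ≤ k) :
    ((k * (k - 1) : ℕ) : ℝ) = (k : ℝ) * ((k : ℝ) - 1) := by
  have h1 : 1 ≤ k := by omega
  push_cast [Nat.cast_sub h1]
  ring

lemma kappa_pos {k : ℕ} (hk : 2 ≤ k) : 0 < (k : ℝ) * ((k : ℝ) - 1) := by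
  have : (2 : ℝ) ≤ (k : ℝ) := by exact_mod_cast hk
  nlinarith

lemma goodCP_mono {k s : ℕ} {ε ε' : ℝ} (h : ε ≤ ε') (hg : GoodCP k s ε) :
    GoodCP k s ε' := by
  unfold GoodCP at *
  have : (1 - ε') * (s : ℝ) ^ 2 ≤ (1 - ε) * (s : ℝ) ^ 2 :=
    mul_le_mul_of_nonneg_right (by linarith) (sq_nonneg _)
  linarith

lemma goodCP_one {k s : ℕ} (hk : 2 ≤ k) : GoodCP k s 1 := by
  unfold GoodCP
  simp only [sub_self, zero_mul]
  have h1 : (0 : ℝ) ≤ (cliquePacking k s : ℝ) := Nat.cast_nonneg _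
  have h2 := kappa_pos hk
  positivity

lemma goodCP_upper {k s : ℕ} (hk : 2 ≤ k) :
    (cliquePacking k s : ℝ) * ((k : ℝ) * ((k : ℝ) - 1)) ≤ (s : ℝ) ^ 2 := by
  have h := cliquePacking_upper hk s
  have h2 : (↑(cliquePacking k s * (k * (k - 1))) : ℝ) ≤ ((s * (s - 1) : ℕ) : ℝ) := by
    exact_mod_cast h
  rw [Nat.cast_mul, kappa_cast hk] at h2
  refine h2.trans ?_
  have h3 : ((s * (s - 1) : ℕ) : ℝ) ≤ ((s * s : ℕ) : ℝ) := by
    exact_mod_cast Nat.mul_le_mul_left s (Nat.sub_le _ _)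
  refine h3.trans ?_
  push_cast
  ring_nf
  exact le_refl _

/-- the purely algebraic core inequality -/
lemma pure_ineq {kR x ε : ℝ} (hk : 2 ≤ kR) (hx : 0 ≤ x) (hε0 : 0 ≤ ε) (hε1 : ε ≤ 1) :
    (1 - ε / 2 - x) * (kR + x) ^ 2 ≤ kR * (kR - ε) := by
  have hk0 : (0 : ℝ) ≤ kR := by linarith
  have t1 : 0 ≤ x * (kR ^ 2 - 2 * kR) := mul_nonneg hx (by nlinarith)
  have t2 : 0 ≤ x ^ 2 * (2 * kR - 1) := mul_nonneg (sq_nonneg x) (by linarith)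
  have t3 : 0 ≤ x ^ 3 := pow_nonneg hx 3
  have t4 : 0 ≤ ε * ((kR + x) ^ 2 / 2 - kR) := by
    apply mul_nonneg hε0
    nlinarith [sq_nonneg x, mul_nonneg hx hk0]
  nlinarith [t1, t2, t3, t4]

lemma good_step {k n next : ℕ} {ε Q : ℝ} (hk : 2 ≤ k) (hn : 0 < n)
    (hcop : ∀ d, 0 < d → d < k → Nat.Coprime d n)
    (h1 : k * n ≤ next) (h2 : (next : ℝ) ≤ (k : ℝ) * n + Q)
    (hε0 : 0 ≤ ε) (hε1 : ε ≤ 1) (hQ : 0 ≤ Q)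
    (hg : GoodCP k n ε) : GoodCP k next (ε / 2 + Q / n) := by
  have hkR : (2 : ℝ) ≤ (k : ℝ) := by exact_mod_cast hk
  have hnR : (0 : ℝ) < (n : ℝ) := by exact_mod_cast hn
  have hκ := kappa_pos hk
  set κ := (k : ℝ) * ((k : ℝ) - 1) with hκdef
  -- natural-number chain
  have e1 : n * n + k * cliquePacking k n ≤ cliquePacking k next :=
    le_trans (engine_nat hk hn hcop) (cliquePacking_mono h1)
  have e1R : ((n : ℝ) * n + (k : ℝ) * (cliquePacking k n : ℝ)) * κ
      ≤ (cliquePacking k next : ℝ) * κ := by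
    apply mul_le_mul_of_nonneg_right _ hκ.le
    exact_mod_cast e1
  have e2R : (n : ℝ) * n * κ + (k : ℝ) * ((1 - ε) * (n : ℝ) ^ 2)
      ≤ (cliquePacking k next : ℝ) * κ := by
    have h3 : (k : ℝ) * ((1 - ε) * (n : ℝ) ^ 2) ≤ (k : ℝ) * ((cliquePacking k n : ℝ) * κ) :=
      mul_le_mul_of_nonneg_left hg (by linarith)
    nlinarith [e1R]
  unfold GoodCP
  rw [← hκdef]
  set x := Q / (n : ℝ) with hxdef
  have hx : 0 ≤ x := div_nonneg hQ hnR.le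
  have hQx : Q = x * n := by
    rw [hxdef]; field_simp
  rcases le_or_gt (1 - (ε / 2 + x)) 0 with hc | hc
  · have hle : (1 - (ε / 2 + Q / (n:ℝ))) * (next : ℝ) ^ 2 ≤ 0 := by
      rw [← hxdef]
      exact mul_nonpos_of_nonpos_of_nonneg hc (sq_nonneg _)
    refine hle.trans ?_
    have : (0 : ℝ) ≤ (cliquePacking k next : ℝ) := Nat.cast_nonneg _
    positivity
  · have hnext2 : (next : ℝ) ^ 2 ≤ (((k : ℝ) + x) * n) ^ 2 := by
      apply pow_le_pow_left₀ (Nat.cast_nonneg _)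
      rw [hQx] at h2
      linarith [h2]
    have hpure := pure_ineq hkR hx hε0 hε1
    have key : (1 - (ε / 2 + x)) * (((k : ℝ) + x) * n) ^ 2
        ≤ (n : ℝ) * n * κ + (k : ℝ) * ((1 - ε) * (n : ℝ) ^ 2) := by
      have hmul : (1 - ε / 2 - x) * ((k : ℝ) + x) ^ 2 * (n : ℝ) ^ 2
          ≤ (k : ℝ) * ((k : ℝ) - ε) * (n : ℝ) ^ 2 :=
        mul_le_mul_of_nonneg_right hpure (sq_nonneg _)
      calc (1 - (ε / 2 + x)) * (((k : ℝ) + x) * n) ^ 2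
          = (1 - ε / 2 - x) * ((k : ℝ) + x) ^ 2 * (n : ℝ) ^ 2 := by ring
        _ ≤ (k : ℝ) * ((k : ℝ) - ε) * (n : ℝ) ^ 2 := hmul
        _ = (n : ℝ) * n * κ + (k : ℝ) * ((1 - ε) * (n : ℝ) ^ 2) := by
            rw [hκdef]; ring
    calc (1 - (ε / 2 + Q / (n:ℝ))) * (next : ℝ) ^ 2
        = (1 - (ε / 2 + x)) * (next : ℝ) ^ 2 := by rw [← hxdef]
      _ ≤ (1 - (ε / 2 + x)) * (((k : ℝ) + x) * n) ^ 2 :=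
          mul_le_mul_of_nonneg_left hnext2 hc.le
      _ ≤ (n : ℝ) * n * κ + (k : ℝ) * ((1 - ε) * (n : ℝ) ^ 2) := key
      _ ≤ (cliquePacking k next : ℝ) * κ := e2R

noncomputable def eseq (k : ℕ) : ℕ → ℝ
  | 0 => 1
  | j + 1 => min (eseq k j) 1 / 2 + (((k - 1).factorial * k : ℕ) : ℝ) / (aseq k j : ℝ)

lemma eseq_nonneg {k : ℕ} (hk : 2 ≤ k) : ∀ j, 0 ≤ eseq k j := by
  intro j
  induction j with
  | zero => norm_num [eseq]
  | succ m ih =>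
    have h1 : (0:ℝ) ≤ min (eseq k m) 1 := le_min ih zero_le_one
    have h2 : (0:ℝ) < (aseq k m : ℝ) := by exact_mod_cast aseq_pos hk m
    have h3 : (0:ℝ) ≤ (((k - 1).factorial * k : ℕ) : ℝ) := Nat.cast_nonneg _
    simp only [eseq]
    positivity

lemma good_eseq {k : ℕ} (hk : 2 ≤ k) : ∀ j, GoodCP k (aseq k j) (eseq k j) := by
  intro j
  induction j with
  | zero => exact goodCP_one hk
  | succ m ih =>
    -- strengthen to the capped epsilon
    have hcap : GoodCP k (aseq k m) (min (eseq k m) 1) := by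
      rcases min_cases (eseq k m) 1 with ⟨hmin, -⟩ | ⟨hmin, -⟩
      · rw [hmin]; exact ih
      · rw [hmin]; exact goodCP_one hk
    have hpos := aseq_pos hk m
    have hcop : ∀ d, 0 < d → d < k → Nat.Coprime d (aseq k m) := by
      apply coprime_of_fac_dvd hpos
      have := aseq_dvd hk m
      exact (Nat.factorial_dvd_factorial (by omega : k - 1 ≤ k - 1)).trans this
    have hstep := good_step (next := aseq k (m + 1)) (Q := (((k - 1).factorial * k : ℕ) : ℝ))
      hk hpos hcop ?_ ?_ (le_min (eseq_nonneg hk m) zero_le_one) (min_le_right _ _)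
      (Nat.cast_nonneg _) hcap
    · simpa [eseq] using hstep
    · simp only [aseq]
      omega
    · have hb : aseq k (m+1) ≤ k * aseq k m + (k - 1).factorial * k := by
        simp only [aseq]
        omega
      calc (aseq k (m+1) : ℝ) ≤ ((k * aseq k m + (k - 1).factorial * k : ℕ) : ℝ) := by
            exact_mod_cast hb
        _ = (k : ℝ) * (aseq k m : ℝ) + (((k - 1).factorial * k : ℕ) : ℝ) := by push_cast; ring

lemma eseq_decay {k : ℕ} (hk : 2 ≤ k) (j : ℕ) :
    eseq k (j + 1) ≤ eseq k j / 2 + (((k - 1).factorial * k : ℕ) : ℝ) / 2 ^ j := by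
  have h1 : min (eseq k j) 1 ≤ eseq k j := min_le_left _ _
  have h2 : (2:ℝ) ^ j ≤ (aseq k j : ℝ) := by exact_mod_cast aseq_ge_pow hk j
  have h3 : (0:ℝ) < 2 ^ j := by positivity
  have h4 : (((k - 1).factorial * k : ℕ) : ℝ) / (aseq k j : ℝ)
      ≤ (((k - 1).factorial * k : ℕ) : ℝ) / 2 ^ j :=
    div_le_div_of_nonneg_left (Nat.cast_nonneg _) h3 h2
  simp only [eseq]
  linarith

lemma exists_small_eseq {k : ℕ} (hk : 2 ≤ k) {ε : ℝ} (hε : 0 < ε) :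
    ∃ j, 1 ≤ j ∧ eseq k j ≤ ε := by
  set Q : ℝ := (((k - 1).factorial * k : ℕ) : ℝ) with hQdef
  have hQ0 : 0 ≤ Q := Nat.cast_nonneg _
  -- a helper : for any c ≥ 0 there is N with c / 2 ^ N < ε / 4
  have hfind : ∀ c : ℝ, 0 ≤ c → ∃ N : ℕ, c / 2 ^ N < ε / 4 := by
    intro c hc
    obtain ⟨N, hN⟩ := pow_unbounded_of_one_lt (c / (ε / 4)) (by norm_num : (1:ℝ) < 2)
    refine ⟨N, ?_⟩
    have h3 : (0:ℝ) < 2 ^ N := by positivity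
    rw [div_lt_iff₀ h3]
    rw [div_lt_iff₀ (by linarith : (0:ℝ) < ε / 4)] at hN
    linarith [hN]
  obtain ⟨N₀, hN₀⟩ := hfind Q hQ0
  set N := N₀ + 1 with hNdef
  have hN : Q / 2 ^ N < ε / 4 := by
    refine lt_of_le_of_lt ?_ hN₀
    apply div_le_div_of_nonneg_left hQ0 (by positivity)
    apply pow_le_pow_right₀ (by norm_num)
    omega
  have hsmall : ∀ j, N ≤ j → Q / 2 ^ j < ε / 4 := by
    intro j hj
    refine lt_of_le_of_lt ?_ hN
    apply div_le_div_of_nonneg_left hQ0 (by positivity)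
    exact pow_le_pow_right₀ (by norm_num) hj
  set b := eseq k N with hbdef
  have hb0 : 0 ≤ b := eseq_nonneg hk N
  have hphase : ∀ t, eseq k (N + t) ≤ 3 / 4 * ε + b / 2 ^ t := by
    intro t
    induction t with
    | zero =>
      simp only [Nat.add_zero, pow_zero, div_one, ← hbdef]
      linarith
    | succ m ih =>
      have hdec := eseq_decay hk (N + m)
      have hsm := (hsmall (N + m) (by omega)).le
      have heq : b / 2 ^ m / 2 = b / 2 ^ (m + 1) := by
        rw [pow_succ]; ring
      have hstep : eseq k (N + (m + 1)) = eseq k ((N + m) + 1) := rfl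
      rw [hstep]
      rw [← hQdef] at hdec
      calc eseq k ((N + m) + 1) ≤ eseq k (N + m) / 2 + Q / 2 ^ (N + m) := hdec
        _ ≤ (3 / 4 * ε + b / 2 ^ m) / 2 + ε / 4 := by linarith
        _ ≤ 3 / 4 * ε + b / 2 ^ (m + 1) := by linarith [heq]
  obtain ⟨t, ht⟩ := hfind b hb0
  refine ⟨N + t, by omega, ?_⟩
  calc eseq k (N + t) ≤ 3 / 4 * ε + b / 2 ^ t := hphase t
    _ ≤ 3 / 4 * ε + ε / 4 := by linarith [ht.le]
    _ = ε := by ring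

lemma exists_good {k : ℕ} (hk : 2 ≤ k) {ε : ℝ} (hε : 0 < ε) :
    ∃ K : ℕ, 2 ≤ K ∧ GoodCP k K ε := by
  obtain ⟨j, hj1, hjε⟩ := exists_small_eseq hk hε
  refine ⟨aseq k j, ?_, goodCP_mono hjε (good_eseq hk j)⟩
  calc 2 = 2 ^ 1 := by norm_num
    _ ≤ 2 ^ j := Nat.pow_le_pow_right (by norm_num) hj1
    _ ≤ aseq k j := aseq_ge_pow hk j

lemma interp {K M s : ℕ} (hK : 0 < K) (hM : 0 < M) (hs : K ≤ s) :
    ∃ t, K * (1 + t * M) ≤ s ∧ s < K * (1 + t * M) + K * M := by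
  set u := s / K with hu
  have hu1 : 1 ≤ u := (Nat.one_le_div_iff hK).2 hs
  set t := (u - 1) / M with ht
  have hdm : M * t + (u - 1) % M = u - 1 := Nat.div_add_mod (u - 1) M
  have hr : (u - 1) % M < M := Nat.mod_lt _ hM
  set e := t * M with he
  have hdm2 : e + (u - 1) % M = u - 1 := by rw [he, mul_comm]; exact hdm
  refine ⟨t, ?_, ?_⟩
  · have h2 : 1 + e ≤ u := by omega
    calc K * (1 + e) ≤ K * u := Nat.mul_le_mul_left K h2
      _ ≤ s := by rw [hu]; exact Nat.mul_div_le s K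
  · have h3 : u + 1 ≤ 1 + e + M := by omega
    have h4 : s < K * u + K := by
      have hdk : K * u + s % K = s := Nat.div_add_mod s K
      have hrk : s % K < K := Nat.mod_lt _ hK
      omega
    calc s < K * u + K := h4
      _ = K * (u + 1) := by ring
      _ ≤ K * (1 + e + M) := Nat.mul_le_mul_left K h3
      _ = K * (1 + e) + K * M := by ring

/-- For fixed `k ≥ 2`, `g_k(s) / (s²/(k(k-1))) → 1` as `s → ∞`. -/
theorem clique_packing_asymptotics (k : ℕ) (hk : 2 ≤ k) :
    Filter.Tendsto
      (fun s : ℕ => (cliquePacking k s : ℝ) / ((s : ℝ) ^ 2 / ((k : ℝ) * ((k : ℝ) - 1))))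
      Filter.atTop (nhds 1) := by
  have hκ := kappa_pos hk
  set κ := (k : ℝ) * ((k : ℝ) - 1) with hκdef
  rw [Metric.tendsto_atTop]
  intro ε hε
  set δ := min ε 1 with hδdef
  have hδ0 : 0 < δ := lt_min hε one_pos
  have hδ1 : δ ≤ 1 := min_le_right _ _
  have hδε : δ ≤ ε := min_le_left _ _
  obtain ⟨K, hK2, hKgood⟩ := exists_good hk (show (0:ℝ) < δ / 6 by linarith)
  rw [GoodCP, ← hκdef] at hKgood
  set M := (K - 1).factorial with hMdef
  have hM0 : 0 < M := Nat.factorial_pos _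
  have hK0 : 0 < K := by omega
  set B := K * M with hBdef
  have hB0 : 0 < B := Nat.mul_pos hK0 hM0
  obtain ⟨N₀, hN₀⟩ := exists_nat_gt (6 * (B : ℝ) / δ)
  refine ⟨max N₀ (K + B), fun s hs => ?_⟩
  have hsN : N₀ ≤ s := le_trans (le_max_left _ _) hs
  have hsKB : K + B ≤ s := le_trans (le_max_right _ _) hs
  have hsK : K ≤ s := by omega
  have hsR : (0:ℝ) < (s : ℝ) := by exact_mod_cast (by omega : 0 < s)
  have hs2 : (0:ℝ) < (s : ℝ) ^ 2 := by positivity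
  have hsB : (B : ℝ) ≤ (s : ℝ) := by exact_mod_cast (by omega : B ≤ s)
  have hs6B : 6 * (B : ℝ) < δ * s := by
    rw [div_lt_iff₀ hδ0] at hN₀
    have h2 : (N₀ : ℝ) ≤ (s : ℝ) := by exact_mod_cast hsN
    nlinarith
  obtain ⟨t, ht1, ht2⟩ := interp hK0 hM0 hsK
  set n := 1 + t * M with hndef
  have hn0 : 0 < n := by omega
  have hcop : ∀ d, 0 < d → d < K → Nat.Coprime d n := by
    apply coprime_of_fac_dvd hn0
    rw [← hMdef, hndef, Nat.add_sub_cancel_left]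
    exact dvd_mul_left M t
  -- density at K * n
  have hKngood : (1 - δ / 6) * (((K * n : ℕ)) : ℝ) ^ 2
      ≤ (cliquePacking k (K * n) : ℝ) * κ := by
    have hd := dense_nat hk hn0 hcop
    have hdR : ((n * n * cliquePacking k K : ℕ) : ℝ) ≤ (cliquePacking k (K * n) : ℝ) := by
      exact_mod_cast hd
    have h1 : (n : ℝ) ^ 2 * ((cliquePacking k K : ℝ) * κ)
        ≤ (cliquePacking k (K * n) : ℝ) * κ := by
      calc (n : ℝ) ^ 2 * ((cliquePacking k K : ℝ) * κ)
          = ((n * n * cliquePacking k K : ℕ) : ℝ) * κ := by push_cast; ring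
        _ ≤ _ := mul_le_mul_of_nonneg_right hdR hκ.le
    have h3 : (n : ℝ) ^ 2 * ((1 - δ / 6) * (K : ℝ) ^ 2)
        ≤ (n : ℝ) ^ 2 * ((cliquePacking k K : ℝ) * κ) :=
      mul_le_mul_of_nonneg_left hKgood (sq_nonneg _)
    calc (1 - δ / 6) * (((K * n : ℕ)) : ℝ) ^ 2
        = (n : ℝ) ^ 2 * ((1 - δ / 6) * (K : ℝ) ^ 2) := by push_cast; ring
      _ ≤ (n : ℝ) ^ 2 * ((cliquePacking k K : ℝ) * κ) := h3
      _ ≤ _ := h1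
  have hsmono : (cliquePacking k (K * n) : ℝ) ≤ (cliquePacking k s : ℝ) := by
    exact_mod_cast cliquePacking_mono ht1
  have hcs : (1 - δ / 6) * ((s : ℝ) - B) ^ 2 ≤ (cliquePacking k s : ℝ) * κ := by
    have hKnR : (s : ℝ) - B ≤ ((K * n : ℕ) : ℝ) := by
      have hlt : (s : ℝ) < ((K * n : ℕ) : ℝ) + B := by exact_mod_cast ht2
      linarith
    have hsub0 : (0:ℝ) ≤ (s : ℝ) - B := by linarith
    have hpow : ((s : ℝ) - B) ^ 2 ≤ (((K * n : ℕ)) : ℝ) ^ 2 :=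
      pow_le_pow_left₀ hsub0 hKnR 2
    have h5 : (0:ℝ) ≤ 1 - δ / 6 := by linarith
    calc (1 - δ / 6) * ((s : ℝ) - B) ^ 2
        ≤ (1 - δ / 6) * (((K * n : ℕ)) : ℝ) ^ 2 := mul_le_mul_of_nonneg_left hpow h5
      _ ≤ (cliquePacking k (K * n) : ℝ) * κ := hKngood
      _ ≤ (cliquePacking k s : ℝ) * κ := mul_le_mul_of_nonneg_right hsmono hκ.le
  have hlow : (1 - δ / 2) * (s : ℝ) ^ 2 < (cliquePacking k s : ℝ) * κ := by
    have key : (1 - δ / 2) * (s : ℝ) ^ 2 < (1 - δ / 6) * ((s : ℝ) - B) ^ 2 := by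
      have hBR : (0:ℝ) ≤ (B : ℝ) := Nat.cast_nonneg _
      nlinarith [sq_nonneg ((s:ℝ) - B), mul_pos hsR hsR,
        mul_nonneg (mul_nonneg hδ0.le hBR) hsR.le, mul_nonneg hBR hsR.le]
    linarith
  have hup := goodCP_upper hk (s := s)
  rw [← hκdef] at hup
  have hfval : (cliquePacking k s : ℝ) / ((s : ℝ) ^ 2 / κ)
      = (cliquePacking k s : ℝ) * κ / (s : ℝ) ^ 2 := div_div_eq_mul_div _ _ _
  rw [Real.dist_eq, hfval]
  have hX1 : (cliquePacking k s : ℝ) * κ / (s : ℝ) ^ 2 ≤ 1 := by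
    rw [div_le_one hs2]; exact hup
  have hX2 : 1 - δ / 2 < (cliquePacking k s : ℝ) * κ / (s : ℝ) ^ 2 := by
    rw [lt_div_iff₀ hs2]; linarith
  rw [abs_sub_lt_iff]
  constructor <;> linarith
end

section
/- Let S be a finite set of cardinality s, let H be a simple graph on vertex set S, and let l and k be integers with 2 ≤ l ≤ k ≤ s. Let M be a family of k-element subsets of S such that any two distinct members of M share at most one element. For a permutation σ of S, let F^l_k(σ,H) be the number of l-element subsets Δ of S that induce a complete subgraph in H and whose image σ(Δ) is contained in some member of M. Then the expectation of F^l_k(σ,H) over a uniformly random permutation σ of S equals cl(H,l)·|M|·(k(k−1)⋯(k−l+1))/(s(s−1)⋯(s−l+1)). -/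
/-!
Summing over the `l`-cliques `Δ` instead of over `σ`, it suffices to count, for a fixed `Δ` with
`|Δ| = l`, the permutations mapping `Δ` into a member of `M`. As `l ≥ 2` and members of `M` meet
in at most one point, that member is unique, so the count is a sum over `K ∈ M`. The group
`Perm V` acts transitively on the embeddings `Δ ↪ V`, so all fibres of `σ ↦ σ|_Δ` have
`s! / s(s-1)⋯(s-l+1)` elements, and `k(k-1)⋯(k-l+1)` of the embeddings land in `K`.
-/

open Finset MulAction

theorem cliqueCount_eq_card_cliqueFinset {V : Type} [Fintype V] [DecidableEq V]
    (H : SimpleGraph V) [DecidableRel H.Adj] (l : ℕ) :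
    cliqueCount H l = #(H.cliqueFinset l) := by
  rw [cliqueCount, ← Set.ncard_coe_finset, H.coe_cliqueFinset]
  rfl

section PretransitiveAction

variable {G X : Type*} [Group G] [MulAction G X] [IsPretransitive G X] [Fintype G]
  [DecidableEq X]

theorem MulAction.card_filter_smul_eq_eq (x y z : X) :
    #{g : G | g • x = y} = #{g : G | g • x = z} := by
  obtain ⟨h, rfl⟩ := exists_smul_eq G y z
  refine card_nbij' (h * ·) (h⁻¹ * ·) (fun g hg => ?_) (fun g hg => ?_)
    (fun g _ => inv_mul_cancel_left h g) (fun g _ => mul_inv_cancel_left h g)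
  all_goals simp_all [mul_smul]

theorem MulAction.card_filter_smul_mem_mul_card [Fintype X] (x : X) (Y : Finset X) :
    #{g : G | g • x ∈ Y} * Fintype.card X = #Y * Fintype.card G := by
  have hfiber : ∀ Y : Finset X, #{g : G | g • x ∈ Y} = #Y * #{g : G | g • x = x} := by
    intro Y
    rw [card_eq_sum_card_fiberwise (f := (· • x)) (t := Y) fun g hg => by simpa using hg,
      ← smul_eq_mul, ← sum_const]
    refine sum_congr rfl fun y hy => ?_
    rw [filter_filter, ← card_filter_smul_eq_eq x y x,
      filter_congr fun g _ => and_iff_right_of_imp fun hg => hg ▸ hy]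
  have hG : Fintype.card G = Fintype.card X * #{g : G | g • x = x} := by
    simpa using hfiber univ
  rw [hfiber, hG]
  ring

end PretransitiveAction

theorem Function.Embedding.card_filter_forall_mem {ι V : Type*} [Fintype ι] [DecidableEq ι]
    [Fintype V] [DecidableEq V] (K : Finset V) :
    #{e : ι ↪ V | ∀ i, e i ∈ K} = (#K).descFactorial (Fintype.card ι) := by
  rw [← Fintype.card_subtype]
  exact (Fintype.card_congr (Equiv.codRestrict ι (K : Set V))).trans (by simp)

theorem Finset.eq_of_subset_of_pairwise_card_inter_le_one {V : Type*} [DecidableEq V]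
    {M : Set (Finset V)} (hM : M.Pairwise fun A B => #(A ∩ B) ≤ 1) {T A B : Finset V}
    (hT : 2 ≤ #T) (hA : A ∈ M) (hB : B ∈ M) (hTA : T ⊆ A) (hTB : T ⊆ B) : A = B := by
  by_contra hAB
  have := card_le_card (subset_inter hTA hTB)
  have := hM hA hB hAB
  omega

variable {V : Type*} [Fintype V] [DecidableEq V]

theorem Equiv.Perm.card_filter_image_subset_mul_descFactorial (Δ K : Finset V) :
    #{σ : Perm V | Δ.image σ ⊆ K} * (Fintype.card V).descFactorial #Δ
      = (#K).descFactorial #Δ * (Fintype.card V).factorial := by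
  have : IsPretransitive (Perm V) (Δ ↪ V) := ⟨exists_smul_eq_embedding⟩
  have h := card_filter_smul_mem_mul_card (G := Perm V)
    (Function.Embedding.subtype fun x : V => x ∈ Δ) {e : Δ ↪ V | ∀ i, e i ∈ K}
  rw [Function.Embedding.card_filter_forall_mem, Fintype.card_embedding_eq,
    Fintype.card_perm, Fintype.card_coe] at h
  convert h using 4 with σ
  simp [image_subset_iff, Function.Embedding.smul_apply]

theorem Equiv.Perm.card_filter_exists_image_subset_mul_descFactorial {k : ℕ}
    (M : Finset (Finset V)) (hM : ∀ A ∈ M, #A = k)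
    (hM' : (M : Set (Finset V)).Pairwise fun A B => #(A ∩ B) ≤ 1) (Δ : Finset V)
    (hΔ : 2 ≤ #Δ) :
    #{σ : Perm V | ∃ K ∈ M, Δ.image σ ⊆ K} * (Fintype.card V).descFactorial #Δ
      = #M * (k.descFactorial #Δ * (Fintype.card V).factorial) := by
  have hunion : ({σ : Perm V | ∃ K ∈ M, Δ.image σ ⊆ K} : Finset (Perm V))
      = M.biUnion fun K => {σ : Perm V | Δ.image σ ⊆ K} := by
    ext σ
    simp
  have hdisj : (M : Set (Finset V)).PairwiseDisjoint
      fun K => ({σ : Perm V | Δ.image σ ⊆ K} : Finset (Perm V)) := by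
    intro A hA B hB hAB
    refine disjoint_filter.2 fun σ _ hσA hσB => hAB ?_
    exact Finset.eq_of_subset_of_pairwise_card_inter_le_one hM'
      (by rwa [card_image_of_injective _ σ.injective]) hA hB hσA hσB
  rw [hunion, card_biUnion hdisj, sum_mul, ← smul_eq_mul, ← sum_const]
  refine sum_congr rfl fun K hK => ?_
  rw [card_filter_image_subset_mul_descFactorial, hM K hK]

theorem SimpleGraph.sum_card_cliques_image_subset_mul_descFactorial (H : SimpleGraph V)
    [DecidableRel H.Adj] {l k : ℕ} (hl : 2 ≤ l) (M : Finset (Finset V))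
    (hM : ∀ A ∈ M, #A = k) (hM' : (M : Set (Finset V)).Pairwise fun A B => #(A ∩ B) ≤ 1) :
    (∑ σ : Equiv.Perm V, #{Δ ∈ H.cliqueFinset l | ∃ K ∈ M, Δ.image σ ⊆ K})
        * (Fintype.card V).descFactorial l
      = #(H.cliqueFinset l) * (#M * (k.descFactorial l * (Fintype.card V).factorial)) := by
  calc _ = (∑ Δ ∈ H.cliqueFinset l, #{σ : Equiv.Perm V | ∃ K ∈ M, Δ.image σ ⊆ K})
          * (Fintype.card V).descFactorial l := by
        congr 1
        exact sum_card_bipartiteAbove_eq_sum_card_bipartiteBelow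
          (r := fun (σ : Equiv.Perm V) (Δ : Finset V) => ∃ K ∈ M, Δ.image σ ⊆ K)
    _ = ∑ Δ ∈ H.cliqueFinset l, #M * (k.descFactorial l * (Fintype.card V).factorial) := by
        rw [sum_mul]
        refine sum_congr rfl fun Δ hΔ => ?_
        obtain rfl := (mem_cliqueFinset_iff.1 hΔ).card_eq
        exact Equiv.Perm.card_filter_exists_image_subset_mul_descFactorial M hM hM' Δ hl
    _ = _ := by rw [sum_const, smul_eq_mul]

/-- For a graph `H` on a vertex set `S` of size `s`, integers `2 ≤ l ≤ k ≤ s`,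
and a family `M` of `k`-element subsets of `S` any two distinct members of which
share at most one element, the expectation over a uniformly random permutation
`σ` of `S` of the number of `l`-cliques `Δ` of `H` with `σ(Δ)` contained in some
member of `M` equals `cl(H,l) · |M| · k(k-1)⋯(k-l+1) / (s(s-1)⋯(s-l+1))`. -/
theorem expectation_cliques_in_clique_system (V : Type) [Fintype V] [DecidableEq V]
    (s : ℕ) (hcard : Fintype.card V = s)
    (H : SimpleGraph V) (l k : ℕ) (hl : 2 ≤ l) (hlk : l ≤ k) (hks : k ≤ s)
    (M : Finset (Finset V)) (hM : ∀ A ∈ M, A.card = k)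
    (hM' : ∀ A ∈ M, ∀ B ∈ M, A ≠ B → (A ∩ B).card ≤ 1) :
    (∑ σ : Equiv.Perm V,
        (Set.ncard {Δ : Finset V | H.IsNClique l Δ ∧ ∃ K ∈ M, Δ.image σ ⊆ K} : ℝ)) /
      (Nat.factorial s : ℝ)
    = (cliqueCount H l : ℝ) * (M.card : ℝ) * (Nat.descFactorial k l : ℝ) /
        (Nat.descFactorial s l : ℝ) := by
  classical
  subst hcard
  have hcount := H.sum_card_cliques_image_subset_mul_descFactorial hl M hM
    fun A hA B hB hAB => hM' A hA B hB hAB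
  have hncard (σ : Equiv.Perm V) :
      Set.ncard {Δ : Finset V | H.IsNClique l Δ ∧ ∃ K ∈ M, Δ.image σ ⊆ K}
        = #{Δ ∈ H.cliqueFinset l | ∃ K ∈ M, Δ.image σ ⊆ K} := by
    rw [← Set.ncard_coe_finset]
    congr 1
    ext Δ
    simp
  have hdesc : ((Fintype.card V).descFactorial l : ℝ) ≠ 0 := by
    exact_mod_cast (Nat.descFactorial_pos.2 (hlk.trans hks)).ne'
  simp_rw [hncard, cliqueCount_eq_card_cliqueFinset, ← Nat.cast_sum]
  rw [div_eq_div_iff (by positivity) hdesc]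
  norm_cast
  rw [hcount]
  ring
end

section
/- Let d ≥ 2 be an integer and set t = ⌊d/2⌋. Every finite t-partite simple graph is isomorphic to a distance graph in ℝ^d: if the vertex set of a finite simple graph H can be partitioned into t parts such that no edge of H joins two vertices in the same part, then there exists an injective map φ from the vertex set of H into d-dimensional Euclidean space such that whenever u and v are adjacent in H, the Euclidean distance between φ(u) and φ(v) equals 1. -/
/-!
Put the vertices of the `i`-th part on the circle of radius `1/√2` in the plane spanned by the
basis vectors `e_{2i}, e_{2i+1}`, at pairwise distinct angles in `[0, π]`. Planes of different
parts are orthogonal, so by Pythagoras two vertices in different parts are at distance `1`.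
Distinct vertices go to distinct points: within a plane because `cos` is injective on `[0, π]`,
across planes because the only common point of two orthogonal planes is `0`.
-/

open Real

section OrthogonalPlanes

variable {E κ : Type*} [NormedAddCommGroup E] [InnerProductSpace ℝ E]
  {e : κ × Fin 2 → E}

noncomputable def circlePoint (e : κ × Fin 2 → E) (r : ℝ) (i : κ) (θ : ℝ) : E :=
  (r * cos θ) • e (i, 0) + (r * sin θ) • e (i, 1)

theorem inner_circlePoint_of_ne (he : Orthonormal ℝ e) {i j : κ} (hij : i ≠ j)
    (r s θ η : ℝ) : inner ℝ (circlePoint e r i θ) (circlePoint e s j η) = 0 := by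
  have h (a b : Fin 2) : inner ℝ (e (i, a)) (e (j, b)) = 0 :=
    he.inner_eq_zero fun h => hij (congrArg Prod.fst h)
  simp [circlePoint, inner_add_left, inner_add_right, real_inner_smul_left,
    real_inner_smul_right, h]

theorem norm_circlePoint (he : Orthonormal ℝ e) (r : ℝ) (i : κ) (θ : ℝ) :
    ‖circlePoint e r i θ‖ = |r| := by
  have h01 : inner ℝ (e (i, 0)) (e (i, 1)) = 0 := he.inner_eq_zero (by simp)
  have hself (a : Fin 2) : inner ℝ (e (i, a)) (e (i, a)) = 1 := by
    rw [real_inner_self_eq_norm_sq, he.norm_eq_one, one_pow]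
  rw [← sq_eq_sq₀ (norm_nonneg _) (abs_nonneg r), ← real_inner_self_eq_norm_sq, sq_abs]
  simp only [circlePoint, inner_add_left, inner_add_right, real_inner_smul_left,
    real_inner_smul_right, hself, real_inner_comm (e (i, 0)), h01]
  linear_combination r ^ 2 * sin_sq_add_cos_sq θ

theorem inner_circlePoint_left (he : Orthonormal ℝ e) (r : ℝ) (i : κ) (θ : ℝ) :
    inner ℝ (e (i, 0)) (circlePoint e r i θ) = r * cos θ := by
  have h01 : inner ℝ (e (i, 0)) (e (i, 1)) = 0 := he.inner_eq_zero (by simp)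
  simp [circlePoint, inner_add_right, real_inner_smul_right, h01, he.norm_eq_one]

theorem injOn_circlePoint (he : Orthonormal ℝ e) {r : ℝ} (hr : r ≠ 0) (i : κ) :
    Set.InjOn (circlePoint e r i) (Set.Icc 0 π) := by
  intro θ hθ η hη h
  have hcos : r * cos θ = r * cos η := by
    rw [← inner_circlePoint_left he, ← inner_circlePoint_left he, h]
  exact injOn_cos hθ hη (mul_left_cancel₀ hr hcos)

theorem dist_eq_one_of_inner_eq_zero {x y : E} (h : inner ℝ x y = 0)
    (hx : ‖x‖ = (√2)⁻¹) (hy : ‖y‖ = (√2)⁻¹) : dist x y = 1 := by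
  have hsq := norm_sub_sq_eq_norm_sq_add_norm_sq_real h
  rw [hx, hy, ← mul_inv, mul_self_sqrt zero_le_two] at hsq
  rw [dist_eq_norm]
  nlinarith [norm_nonneg (x - y)]

theorem exists_injective_dist_eq_one_of_orthonormal {V : Type*} [Countable V]
    (he : Orthonormal ℝ e) (p : V → κ) :
    ∃ φ : V → E, Function.Injective φ ∧ ∀ u v, p u ≠ p v → dist (φ u) (φ v) = 1 := by
  obtain ⟨ι, hι⟩ := Countable.exists_injective_nat V
  let θ : V → Set.Icc 0 π := (Set.Icc_infinite pi_pos).natEmbedding _ ∘ ι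
  have hθ : Function.Injective θ := ((Set.Icc_infinite pi_pos).natEmbedding _).injective.comp hι
  have hr : (√2)⁻¹ ≠ 0 := by positivity
  have hnorm (v : V) : ‖circlePoint e (√2)⁻¹ (p v) (θ v)‖ = (√2)⁻¹ := by
    rw [norm_circlePoint he, abs_of_pos (by positivity)]
  refine ⟨fun v => circlePoint e (√2)⁻¹ (p v) (θ v), fun u v huv => ?_, fun u v hp =>
    dist_eq_one_of_inner_eq_zero (inner_circlePoint_of_ne he hp _ _ _ _) (hnorm u) (hnorm v)⟩
  beta_reduce at huv
  by_cases hp : p u = p v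
  · simp only [hp] at huv
    exact hθ (Subtype.ext (injOn_circlePoint he hr _ (θ u).2 (θ v).2 huv))
  · have := inner_circlePoint_of_ne he hp (√2)⁻¹ (√2)⁻¹ (θ u) (θ v)
    rw [← huv, real_inner_self_eq_norm_sq, hnorm] at this
    exact absurd this (by positivity)

end OrthogonalPlanes

theorem multipartite_is_distance_graph_general (d : ℕ)
    (V : Type) [Fintype V] (H : SimpleGraph V)
    (p : V → Fin (d / 2)) (hp : ∀ u v, H.Adj u v → p u ≠ p v) :
    ∃ φ : V → EuclideanSpace ℝ (Fin d), Function.Injective φ ∧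
      ∀ u v : V, H.Adj u v → dist (φ u) (φ v) = 1 := by
  have he : Orthonormal ℝ fun ij : Fin (d / 2) × Fin 2 =>
      EuclideanSpace.single (Fin.castLE (Nat.div_mul_le_self d 2) (finProdFinEquiv ij)) (1 : ℝ) :=
    EuclideanSpace.orthonormal_single.comp _
      ((Fin.castLE_injective _).comp finProdFinEquiv.injective)
  obtain ⟨φ, hφ, hdist⟩ := exists_injective_dist_eq_one_of_orthonormal he p
  exact ⟨φ, hφ, fun u v huv => hdist u v (hp u v huv)⟩

/-- Every finite `⌊d/2⌋`-partite simple graph is isomorphic to a distance graph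
in `ℝ^d`: if the vertices can be colored with `⌊d/2⌋` colors so that adjacent
vertices get distinct colors, then there is an injective map of the vertices
into `d`-dimensional Euclidean space sending adjacent pairs to pairs at
Euclidean distance exactly 1. -/
theorem multipartite_is_distance_graph (d : ℕ) (hd : 2 ≤ d)
    (V : Type) [Fintype V] (H : SimpleGraph V)
    (p : V → Fin (d / 2)) (hp : ∀ u v, H.Adj u v → p u ≠ p v) :
    ∃ φ : V → EuclideanSpace ℝ (Fin d), Function.Injective φ ∧
      ∀ u v : V, H.Adj u v → dist (φ u) (φ v) = 1 :=
  multipartite_is_distance_graph_general d V H p hp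
end
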